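/- arXiv:2407.07767 — 9 statements merged into one kernel-verified Lean document; each statement's English description precedes it below -/
import Mathlib

section
/- Let ξ be a real-valued random variable whose law μ has a nonzero absolutely continuous part with respect to Lebesgue measure; that is, in the Lebesgue decomposition μ = μ_ac + μ_s into an absolutely continuous part μ_ac and a singular part μ_s, one has μ_ac ≠ 0. Then ξ belongs to the class 𝔻. -/
/-!
The law `μ` of `ξ` dominates its absolutely continuous part, an atomless nonzero measure, so the
support of `μ` is infinite and contains two distinct nonzero points `a < b`. Small intervals `B₁`
around `a` and `B₂` around `b`, avoiding `0` and separated by `c = (a + b) / 2`, have positive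
`μ`-measure; the conditional mean of `x` on `B₁` lies below `c` and the one on `B₂` above `c`,
which is exactly `p₂ e₁ < p₁ e₂`.
-/

open MeasureTheory ProbabilityTheory

/-- A real-valued random variable `ξ` on `(Ω, P)` belongs to the class `𝔻` if there exist
two distinct bounded Borel sets `B₁, B₂ ⊆ ℝ` such that `pᵢ := P[ξ ∈ Bᵢ] > 0`,
`eᵢ := E[ξ ⋅ 1_{ξ ∈ Bᵢ}] ≠ 0`, and `p₂ e₁ − p₁ e₂ ≠ 0`. -/
def MemD {Ω : Type*} [MeasurableSpace Ω] (P : Measure Ω) (ξ : Ω → ℝ) : Prop :=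
  ∃ B₁ B₂ : Set ℝ, MeasurableSet B₁ ∧ MeasurableSet B₂ ∧
    Bornology.IsBounded B₁ ∧ Bornology.IsBounded B₂ ∧ B₁ ≠ B₂ ∧
    0 < P (ξ ⁻¹' B₁) ∧ 0 < P (ξ ⁻¹' B₂) ∧
    (∫ ω in ξ ⁻¹' B₁, ξ ω ∂P) ≠ 0 ∧ (∫ ω in ξ ⁻¹' B₂, ξ ω ∂P) ≠ 0 ∧
    (P (ξ ⁻¹' B₂)).toReal * (∫ ω in ξ ⁻¹' B₁, ξ ω ∂P) -
      (P (ξ ⁻¹' B₁)).toReal * (∫ ω in ξ ⁻¹' B₂, ξ ω ∂P) ≠ 0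

open Set

lemma setIntegral_pos_of_forall_pos {X : Type*} [MeasurableSpace X] {μ : Measure X} {f : X → ℝ}
    {B : Set X} (hB : MeasurableSet B) (hf : IntegrableOn f B μ) (hpos : ∀ x ∈ B, 0 < f x)
    (hμB : μ B ≠ 0) :
    0 < ∫ x in B, f x ∂μ := by
  rw [setIntegral_pos_iff_support_of_nonneg_ae
    ((ae_restrict_iff' hB).2 (.of_forall fun x hx => (hpos x hx).le)) hf]
  exact (pos_iff_ne_zero.2 hμB).trans_le (measure_mono fun x hx => ⟨(hpos x hx).ne', hx⟩)

section RealLine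

variable {μ : Measure ℝ} [IsFiniteMeasure μ] {B : Set ℝ} {c : ℝ}

lemma integrableOn_id_of_isBounded (hbd : Bornology.IsBounded B) :
    IntegrableOn (fun x => x) B μ :=
  (continuous_id.continuousOn.integrableOn_compact hbd.isCompact_closure).mono_set subset_closure

lemma mul_measureReal_lt_setIntegral_of_subset_Ioi (hB : MeasurableSet B)
    (hbd : Bornology.IsBounded B) (hμB : μ B ≠ 0) (hBc : B ⊆ Ioi c) :
    c * μ.real B < ∫ x in B, x ∂μ := by
  have hpos : 0 < ∫ x in B, (x - c) ∂μ :=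
    setIntegral_pos_of_forall_pos hB ((integrableOn_id_of_isBounded hbd).sub integrableOn_const)
      (fun x hx => sub_pos.2 (hBc hx)) hμB
  rw [integral_sub (integrableOn_id_of_isBounded hbd) integrableOn_const, setIntegral_const,
    smul_eq_mul] at hpos
  linarith

lemma setIntegral_lt_mul_measureReal_of_subset_Iio (hB : MeasurableSet B)
    (hbd : Bornology.IsBounded B) (hμB : μ B ≠ 0) (hBc : B ⊆ Iio c) :
    ∫ x in B, x ∂μ < c * μ.real B := by
  have hc : IntegrableOn (fun _ => c) B μ := integrableOn_const
  have hpos : 0 < ∫ x in B, (c - x) ∂μ :=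
    setIntegral_pos_of_forall_pos hB (hc.sub (integrableOn_id_of_isBounded hbd))
      (fun x hx => sub_pos.2 (hBc hx)) hμB
  rw [integral_sub hc (integrableOn_id_of_isBounded hbd), setIntegral_const,
    smul_eq_mul] at hpos
  linarith

lemma setIntegral_Ioo_ne_zero {a r : ℝ} (ha : a ≠ 0) (hr : r ≤ |a|)
    (hμ : μ (Ioo (a - r) (a + r)) ≠ 0) : ∫ x in Ioo (a - r) (a + r), x ∂μ ≠ 0 := by
  rcases ha.lt_or_gt with ha | ha
  · rw [abs_of_neg ha] at hr
    simpa using (setIntegral_lt_mul_measureReal_of_subset_Iio measurableSet_Ioo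
      (Metric.isBounded_Ioo _ _) hμ
      (Ioo_subset_Iio_self.trans (Iio_subset_Iio (show a + r ≤ 0 by linarith)))).ne
  · rw [abs_of_pos ha] at hr
    simpa using (mul_measureReal_lt_setIntegral_of_subset_Ioi measurableSet_Ioo
      (Metric.isBounded_Ioo _ _) hμ
      (Ioo_subset_Ioi_self.trans (Ioi_subset_Ioi (show 0 ≤ a - r by linarith)))).ne'

end RealLine

lemma measure_Ioo_ne_zero_of_mem_support {μ : Measure ℝ} {a r : ℝ} (ha : a ∈ μ.support)
    (hr : 0 < r) :
    μ (Ioo (a - r) (a + r)) ≠ 0 :=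
  ((Measure.mem_support_iff_forall a).1 ha _ (Ioo_mem_nhds (by linarith) (by linarith))).ne'

lemma MeasureTheory.Measure.support_infinite {X : Type*} [TopologicalSpace X] [MeasurableSpace X]
    [HereditarilyLindelofSpace X] {ν : Measure X} [NullSingletonClass ν] (hν : ν ≠ 0) :
    ν.support.Infinite := fun hfin =>
  hν <| Measure.measure_univ_eq_zero.1 <| by
    rw [← union_compl_self ν.support]
    exact measure_union_null (hfin.measure_zero ν) Measure.measure_compl_support

theorem memD_id_of_mem_support {μ : Measure ℝ} [IsFiniteMeasure μ] {a b : ℝ}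
    (ha : a ∈ μ.support) (hb : b ∈ μ.support) (ha0 : a ≠ 0) (hb0 : b ≠ 0) (hab : a ≠ b) :
    MemD μ id := by
  wlog hlt : a < b generalizing a b
  · exact this hb ha hb0 ha0 hab.symm (hab.symm.lt_of_le (not_lt.1 hlt))
  set r := min (min |a| |b|) ((b - a) / 2)
  have hr : 0 < r := lt_min (lt_min (abs_pos.2 ha0) (abs_pos.2 hb0)) (by linarith)
  have hra : r ≤ |a| := (min_le_left _ _).trans (min_le_left _ _)
  have hrb : r ≤ |b| := (min_le_left _ _).trans (min_le_right _ _)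
  have hrba : r ≤ (b - a) / 2 := min_le_right _ _
  set B₁ := Ioo (a - r) (a + r)
  set B₂ := Ioo (b - r) (b + r)
  have hμ₁ := measure_Ioo_ne_zero_of_mem_support ha hr
  have hμ₂ := measure_Ioo_ne_zero_of_mem_support hb hr
  have he₁ : ∫ x in B₁, x ∂μ < (a + b) / 2 * μ.real B₁ :=
    setIntegral_lt_mul_measureReal_of_subset_Iio measurableSet_Ioo (Metric.isBounded_Ioo _ _) hμ₁
      (Ioo_subset_Iio_self.trans (Iio_subset_Iio (by linarith)))
  have he₂ : (a + b) / 2 * μ.real B₂ < ∫ x in B₂, x ∂μ :=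
    mul_measureReal_lt_setIntegral_of_subset_Ioi measurableSet_Ioo (Metric.isBounded_Ioo _ _) hμ₂
      (Ioo_subset_Ioi_self.trans (Ioi_subset_Ioi (by linarith)))
  have hp₁ : 0 < μ.real B₁ := ENNReal.toReal_pos hμ₁ (measure_ne_top μ _)
  have hp₂ : 0 < μ.real B₂ := ENNReal.toReal_pos hμ₂ (measure_ne_top μ _)
  have hdet : μ.real B₂ * ∫ x in B₁, x ∂μ - μ.real B₁ * ∫ x in B₂, x ∂μ ≠ 0 := by
    nlinarith [mul_lt_mul_of_pos_left he₁ hp₂, mul_lt_mul_of_pos_left he₂ hp₁]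
  refine ⟨B₁, B₂, measurableSet_Ioo, measurableSet_Ioo, Metric.isBounded_Ioo _ _,
    Metric.isBounded_Ioo _ _, fun h => hdet (by rw [h]; ring), pos_iff_ne_zero.2 hμ₁,
    pos_iff_ne_zero.2 hμ₂, setIntegral_Ioo_ne_zero ha0 hra hμ₁,
    setIntegral_Ioo_ne_zero hb0 hrb hμ₂, hdet⟩

theorem MemD.of_map_id {Ω : Type*} [MeasurableSpace Ω] {P : Measure Ω} {ξ : Ω → ℝ}
    (hξ : Measurable ξ) (h : MemD (P.map ξ) id) : MemD P ξ := by
  obtain ⟨B₁, B₂, hB₁, hB₂, h⟩ := h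
  have hintegral : ∀ {B}, MeasurableSet B → ∫ x in B, x ∂P.map ξ = ∫ ω in ξ ⁻¹' B, ξ ω ∂P :=
    fun hB => setIntegral_map hB aestronglyMeasurable_id hξ.aemeasurable
  simp only [preimage_id, id_eq] at h
  rw [Measure.map_apply hξ hB₁, Measure.map_apply hξ hB₂, hintegral hB₁, hintegral hB₂] at h
  exact ⟨B₁, B₂, hB₁, hB₂, h⟩

/-- If the law of a real random variable `ξ` has a nonzero absolutely continuous part with
respect to Lebesgue measure (in the Lebesgue decomposition of its law), then `ξ` belongs to
the class `𝔻`. -/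
theorem absolutelyContinuousPart_memD {Ω : Type*} [MeasurableSpace Ω] (P : Measure Ω)
    [IsProbabilityMeasure P] (ξ : Ω → ℝ) (hξ : Measurable ξ)
    (hac : MeasureTheory.volume.withDensity
      ((Measure.map ξ P).rnDeriv MeasureTheory.volume) ≠ 0) :
    MemD P ξ := by
  set μ := Measure.map ξ P
  have hsupp : (volume.withDensity (μ.rnDeriv volume)).support ⊆ μ.support :=
    Measure.support_mono (μ.withDensity_rnDeriv_le volume)
  obtain ⟨a, ⟨ha, ha0⟩, b, ⟨hb, hb0⟩, hab⟩ :=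
    ((Measure.support_infinite hac).sdiff (finite_singleton 0)).nontrivial
  have : IsFiniteMeasure μ := Measure.isFiniteMeasure_map P ξ
  exact MemD.of_map_id hξ (memD_id_of_mem_support (hsupp ha) (hsupp hb) ha0 hb0 hab)
end

section
/- Let p ∈ [1, ∞). In the setting of the d-dimensional stochastic Volterra summation equation, assume each component ⟨ξ(n), eⱼ⟩ (j = 1, …, d) is equal in distribution to a fixed random variable ξⱼ belonging to the class 𝔻 (no moment condition is assumed). If X ∈ ℓ^p(ℤ₊; ℝ^d) almost surely, then f ∈ ℓ^p(ℤ₊; ℝ^d) and σ ∈ ℓ^p(ℤ₊; ℝ^{d×d}). -/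
/-!
Since `σ(n)` is diagonal, the recursion gives
`f(n)ᵢ + σ(n)ᵢᵢ ξ(n+1)ᵢ = X(n+1)ᵢ - X(n)ᵢ - (K ⋆ X)(n)ᵢ`, which is a.s. in `ℓ^p` because
`ℓ¹ ⋆ ℓ^p ⊆ ℓ^p` (Hölder). So it suffices that `∑ₙ |aₙ + sₙ ζₙ|^p < ∞` a.s., for independent
`ζₙ` with a common law `μ` that is not a point mass, forces `a, s ∈ ℓ^p`.
For `Zₙ = min(|aₙ + sₙ ζₙ|^p, 1)`, independence and `E e^{-Zₙ} ≤ exp(-c E Zₙ)` give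
`0 < E exp(-∑ₙ Zₙ) ≤ exp(-c ∑ₙ E Zₙ)`, so `∑ₙ E Zₙ < ∞`. Small balls around two distinct
points of the support of `μ` give `q, κ > 0` with `μ {x | κ max(|a|, |s|) ≤ |a + s x|} ≥ q`
for all `a, s`, hence `E Zₙ ≥ q min((κ max(|aₙ|, |sₙ|))^p, 1)`. A law in `𝔻` is not a point
mass: if `ξ = c` a.s. then `eᵢ = c pᵢ` and `p₂e₁ - p₁e₂ = 0`.
-/

open MeasureTheory ProbabilityTheory

open Finset Filter Metric Matrix

lemma MemD.not_ae_map_eq_const {Ω : Type*} [MeasurableSpace Ω] {P : Measure Ω} {ξ : Ω → ℝ}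
    (hξ : Measurable ξ) (h : MemD P ξ) (c : ℝ) : ¬ ∀ᵐ x ∂P.map ξ, x = c := by
  rw [ae_map_iff (p := (· = c)) hξ.aemeasurable (measurableSet_singleton c)]
  intro hc
  obtain ⟨B₁, B₂, -, -, -, -, -, -, -, -, -, hdet⟩ := h
  have hint : ∀ S, ∫ ω in S, ξ ω ∂P = (P S).toReal * c := fun S => by
    rw [integral_congr_ae (ae_restrict_of_ae hc), integral_const, smul_eq_mul,
      measureReal_restrict_apply_univ, measureReal_def]
  exact hdet (by rw [hint, hint]; ring)

lemma memℓp_ofReal_iff {α : Type*} {p : ℝ} (hp : 0 < p) {x : α → ℝ} :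
    Memℓp x (ENNReal.ofReal p) ↔ Summable fun i => |x i| ^ p := by
  rw [memℓp_gen_iff (by rwa [ENNReal.toReal_ofReal hp.le])]
  simp only [Real.norm_eq_abs, ENNReal.toReal_ofReal hp.le]

lemma Memℓp.comp_add_one {p : ℝ} (hp : 0 < p) {x : ℕ → ℝ} (hx : Memℓp x (ENNReal.ofReal p)) :
    Memℓp (fun n => x (n + 1)) (ENNReal.ofReal p) := by
  rw [memℓp_ofReal_iff hp] at hx ⊢
  exact (summable_nat_add_iff 1).2 hx

lemma abs_sum_range_mul_rpow_le {p : ℝ} (hp : 1 ≤ p) (k x : ℕ → ℝ) (n : ℕ) :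
    |∑ j ∈ range (n + 1), k (n - j) * x j| ^ p ≤
      (∑ j ∈ range (n + 1), |k j|) ^ (p - 1) * ∑ j ∈ range (n + 1), |x j| ^ p * |k (n - j)| := by
  have hp0 : 0 < p := one_pos.trans_le hp
  have hW : ∑ j ∈ range (n + 1), |k (n - j)| = ∑ j ∈ range (n + 1), |k j| := by
    simpa using sum_range_reflect (fun j => |k j|) (n + 1)
  have hHolder := Real.inner_le_weight_mul_Lp_of_nonneg (range (n + 1)) hp
    (fun j => |k (n - j)|) (fun j => |x j|) (fun _ => abs_nonneg _) (fun _ => abs_nonneg _)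
  rw [hW] at hHolder
  calc |∑ j ∈ range (n + 1), k (n - j) * x j| ^ p
      ≤ (∑ j ∈ range (n + 1), |k (n - j)| * |x j|) ^ p := by
        gcongr
        exact (abs_sum_le_sum_abs _ _).trans_eq (by simp only [abs_mul])
    _ ≤ ((∑ j ∈ range (n + 1), |k j|) ^ (1 - p⁻¹) *
          (∑ j ∈ range (n + 1), |k (n - j)| * |x j| ^ p) ^ p⁻¹) ^ p := by
        gcongr
    _ = _ := by
        rw [Real.mul_rpow (by positivity) (by positivity), ← Real.rpow_mul (by positivity),
          ← Real.rpow_mul (sum_nonneg fun j _ => by positivity), inv_mul_cancel₀ hp0.ne',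
          Real.rpow_one, sub_mul, one_mul, inv_mul_cancel₀ hp0.ne']
        exact congrArg _ (sum_congr rfl fun j _ => mul_comm _ _)

lemma Memℓp.sum_range_mul {p : ℝ} (hp : 1 ≤ p) {k x : ℕ → ℝ} (hk : Summable fun n => |k n|)
    (hx : Memℓp x (ENNReal.ofReal p)) :
    Memℓp (fun n => ∑ j ∈ range (n + 1), k (n - j) * x j) (ENNReal.ofReal p) := by
  have hp0 : 0 < p := one_pos.trans_le hp
  rw [memℓp_ofReal_iff hp0] at hx ⊢
  have hCauchy : Summable fun n => ∑ j ∈ range (n + 1), |x j| ^ p * |k (n - j)| := by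
    refine (summable_norm_sum_mul_range_of_summable_norm (f := fun j => |x j| ^ p)
      (g := fun j => |k j|) (by simpa [abs_of_nonneg, Real.rpow_nonneg] using hx)
      (by simpa using hk)).congr fun n => ?_
    exact abs_of_nonneg (sum_nonneg fun j _ => by positivity)
  refine .of_nonneg_of_le (fun n => by positivity) (fun n => ?_)
    (hCauchy.mul_left ((∑' n, |k n|) ^ (p - 1)))
  refine (abs_sum_range_mul_rpow_le hp k x n).trans ?_
  gcongr
  exact hk.sum_le_tsum _ fun j _ => abs_nonneg _

lemma memℓp_sub_sub_sum_range_mulVec {ι : Type*} [Fintype ι] {p : ℝ} (hp : 1 ≤ p)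
    {K : ℕ → Matrix ι ι ℝ} (hK : ∀ i j, Summable fun n => |K n i j|) {x : ℕ → ι → ℝ}
    (hx : ∀ i, Memℓp (fun n => x n i) (ENNReal.ofReal p)) (i : ι) :
    Memℓp (fun n => (x (n + 1) - x n - ∑ j ∈ range (n + 1), K (n - j) *ᵥ x j) i)
      (ENNReal.ofReal p) := by
  have hconv := Memℓp.finsetSum univ fun l _ => (hx l).sum_range_mul hp (hK i l)
  convert (((hx i).comp_add_one (one_pos.trans_le hp)).sub (hx i)).sub hconv using 1
  ext n
  simp only [Pi.sub_apply, mulVec, dotProduct, Finset.sum_apply]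
  rw [sum_comm]

lemma summable_of_summable_min_one {ι : Type*} {x : ι → ℝ} (hx : ∀ i, 0 ≤ x i)
    (h : Summable fun i => min (x i) 1) : Summable x := by
  refine h.of_norm_bounded_eventually ?_
  filter_upwards [h.tendsto_cofinite_zero.eventually (gt_mem_nhds one_pos)] with i hi
  have hx1 : x i ≤ 1 := by
    by_contra! h1
    rw [min_eq_right h1.le] at hi
    exact lt_irrefl _ hi
  rw [Real.norm_eq_abs, abs_of_nonneg (hx i), min_eq_left hx1]

lemma exists_mem_pair_half_abs_sub_le_abs_sub (x₁ x₂ c : ℝ) :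
    ∃ x ∈ ({x₁, x₂} : Set ℝ), |x₁ - x₂| / 2 ≤ |x - c| := by
  by_contra! h
  have := abs_sub_le x₁ c x₂
  rw [abs_sub_comm c x₂] at this
  linarith [h x₁ (by simp), h x₂ (by simp)]

lemma exists_forall_ball_mul_max_le_abs_add_mul {x₁ x₂ : ℝ} (hx : x₁ ≠ x₂) :
    ∃ r > 0, ∃ κ > 0, ∀ a s : ℝ, ∃ x ∈ ({x₁, x₂} : Set ℝ),
      ∀ y ∈ ball x r, κ * max |a| |s| ≤ |a + s * y| := by
  set r := |x₁ - x₂| / 4 with hr_def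
  have hr : 0 < r := by have := sub_ne_zero.2 hx; positivity
  set M := max |x₁| |x₂| + r + 1
  have hM : 1 ≤ M := by have := (abs_nonneg x₁).trans (le_max_left |x₁| |x₂|); linarith
  refine ⟨r, hr, min (1 / 2) (r / (2 * M)), by positivity, fun a s => ?_⟩
  by_cases hcase : 2 * M * |s| ≤ |a|
  · refine ⟨x₁, by simp, fun y hy => ?_⟩
    have hyM : |y| ≤ M := by
      have := abs_sub_abs_le_abs_sub y x₁
      rw [mem_ball, Real.dist_eq] at hy
      linarith [le_max_left |x₁| |x₂|]
    have hsy : |a| - |s| * M ≤ |a + s * y| := by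
      have := abs_sub_abs_le_abs_sub a (-(s * y))
      rw [sub_neg_eq_add, abs_neg, abs_mul] at this
      nlinarith [abs_nonneg s]
    have hmax : max |a| |s| ≤ |a| := max_le le_rfl (by nlinarith [abs_nonneg s])
    calc min (1 / 2) (r / (2 * M)) * max |a| |s| ≤ 1 / 2 * |a| := by
          gcongr
          · exact min_le_left _ _
      _ ≤ |a + s * y| := by nlinarith [abs_nonneg s]
  · replace hcase := not_le.1 hcase
    have hs : s ≠ 0 := by rintro rfl; simp at hcase; linarith [abs_nonneg a]
    set c := -a / s
    obtain ⟨x, hx, hxc⟩ := exists_mem_pair_half_abs_sub_le_abs_sub x₁ x₂ c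
    refine ⟨x, hx, fun y hy => ?_⟩
    have hyc : r ≤ |y - c| := by
      have := abs_sub_abs_le_abs_sub (x - c) (x - y)
      rw [mem_ball, Real.dist_eq] at hy
      rw [abs_sub_comm x y, show x - c - (x - y) = y - c by ring] at this
      linarith
    have hfactor : a + s * y = s * (y - c) := by
      simp only [c]; field_simp; ring
    have hmax : max |a| |s| ≤ 2 * M * |s| := max_le hcase.le (by nlinarith [abs_nonneg s])
    calc min (1 / 2) (r / (2 * M)) * max |a| |s| ≤ r / (2 * M) * (2 * M * |s|) := by
          gcongr
          exact min_le_right _ _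
      _ = |s| * r := by field_simp
      _ ≤ |a + s * y| := by
          rw [hfactor, abs_mul]
          gcongr

lemma MeasureTheory.Measure.exists_mem_support_ne {X : Type*} [TopologicalSpace X]
    [HereditarilyLindelofSpace X] [MeasurableSpace X] [Nonempty X] {μ : Measure X}
    (hμ : ∀ c, ¬ ∀ᵐ x ∂μ, x = c) :
    ∃ x₁ ∈ μ.support, ∃ x₂ ∈ μ.support, x₁ ≠ x₂ := by
  obtain ⟨x₁, hx₁⟩ := Measure.nonempty_support (μ := μ) fun h =>
    hμ (Classical.arbitrary X) (by simp [h])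
  refine ⟨x₁, hx₁, ?_⟩
  by_contra! h
  refine hμ x₁ (measure_mono_null (fun x hx => ?_) Measure.measure_compl_support)
  exact fun hmem => hx (h x hmem).symm

lemma exists_pos_forall_le_measureReal_mul_max_le_abs_add_mul {μ : Measure ℝ} [IsFiniteMeasure μ]
    (hμ : ∀ c, ¬ ∀ᵐ x ∂μ, x = c) :
    ∃ q > 0, ∃ κ > 0, ∀ a s : ℝ, q ≤ μ.real {x | κ * max |a| |s| ≤ |a + s * x|} := by
  obtain ⟨x₁, hx₁, x₂, hx₂, hne⟩ := Measure.exists_mem_support_ne hμ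
  obtain ⟨r, hr, κ, hκ, hball⟩ := exists_forall_ball_mul_max_le_abs_add_mul hne
  have hpos : ∀ x ∈ μ.support, 0 < μ.real (ball x r) := fun x hx =>
    ENNReal.toReal_pos ((Measure.mem_support_iff_forall x).1 hx _ (ball_mem_nhds x hr)).ne'
      (measure_ne_top μ _)
  refine ⟨min (μ.real (ball x₁ r)) (μ.real (ball x₂ r)), lt_min (hpos x₁ hx₁) (hpos x₂ hx₂),
    κ, hκ, fun a s => ?_⟩
  obtain ⟨x, hx, hxball⟩ := hball a s
  calc min (μ.real (ball x₁ r)) (μ.real (ball x₂ r)) ≤ μ.real (ball x r) := by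
        rcases hx with rfl | rfl
        exacts [min_le_left _ _, min_le_right _ _]
    _ ≤ μ.real {x | κ * max |a| |s| ≤ |a + s * x|} := measureReal_mono hxball

lemma exists_pos_forall_mul_min_rpow_le_integral_min_rpow {μ : Measure ℝ} [IsFiniteMeasure μ]
    (hμ : ∀ c, ¬ ∀ᵐ x ∂μ, x = c) {p : ℝ} (hp : 0 ≤ p) :
    ∃ q > 0, ∃ κ > 0, ∀ a s : ℝ,
      q * min ((κ * max |a| |s|) ^ p) 1 ≤ ∫ x, min (|a + s * x| ^ p) 1 ∂μ := by
  obtain ⟨q, hq, κ, hκ, hlow⟩ := exists_pos_forall_le_measureReal_mul_max_le_abs_add_mul hμ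
  refine ⟨q, hq, κ, hκ, fun a s => ?_⟩
  set ε := min ((κ * max |a| |s|) ^ p) 1
  have hg : Measurable fun x => min (|a + s * x| ^ p) 1 := by fun_prop
  calc q * ε ≤ μ.real {x | ε ≤ min (|a + s * x| ^ p) 1} * ε := by
        gcongr
        refine (hlow a s).trans (measureReal_mono fun x hx => ?_)
        exact min_le_min_right 1 (Real.rpow_le_rpow (by positivity) hx hp)
    _ ≤ ∫ x, min (|a + s * x| ^ p) 1 ∂μ := by
        rw [mul_comm]
        exact mul_meas_ge_le_integral_of_nonneg (.of_forall fun x => by positivity)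
          (.of_mem_Icc 0 1 hg.aemeasurable (.of_forall fun x =>
            ⟨by positivity, min_le_right _ _⟩)) ε

lemma Real.exp_neg_le_one_sub_mul {z : ℝ} (h0 : 0 ≤ z) (h1 : z ≤ 1) :
    Real.exp (-z) ≤ 1 - (1 - Real.exp (-1)) * z := by
  calc Real.exp (-z) = Real.exp (z * (-1) + (1 - z) * 0) := by ring_nf
    _ ≤ z * Real.exp (-1) + (1 - z) * Real.exp 0 :=
        convexOn_exp.2 (Set.mem_univ _) (Set.mem_univ _) h0 (by linarith) (by ring)
    _ = 1 - (1 - Real.exp (-1)) * z := by rw [Real.exp_zero]; ring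

lemma integrable_exp_neg_of_nonneg {Ω : Type*} [MeasurableSpace Ω] {P : Measure Ω}
    [IsFiniteMeasure P] {Y : Ω → ℝ} (hY : Measurable Y) (h0 : ∀ ω, 0 ≤ Y ω) :
    Integrable (fun ω => Real.exp (-Y ω)) P :=
  .of_mem_Icc 0 1 (by fun_prop) (.of_forall fun ω =>
    ⟨(Real.exp_pos _).le, Real.exp_le_one_iff.2 (neg_nonpos.2 (h0 ω))⟩)

lemma ProbabilityTheory.iIndepFun.integral_prod_range_comp {Ω β : Type*} [MeasurableSpace Ω]
    [MeasurableSpace β] {P : Measure Ω} {Z : ℕ → Ω → β} (hind : iIndepFun Z P)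
    (hZ : ∀ n, Measurable (Z n)) {f : β → ℝ} (hf : Measurable f) (N : ℕ) :
    ∫ ω, ∏ n ∈ range N, f (Z n ω) ∂P = ∏ n ∈ range N, ∫ ω, f (Z n ω) ∂P := by
  simp_rw [prod_range]
  exact (hind.precomp (Fin.val_injective (n := N))).integral_fun_prod_comp
    (fun i => (hZ i).aemeasurable) fun _ => hf.aestronglyMeasurable

section Independence

variable {Ω : Type*} [MeasurableSpace Ω] {P : Measure Ω} [IsProbabilityMeasure P]

lemma integral_exp_neg_le_exp_neg_mul_integral {Z : Ω → ℝ} (hZ : Measurable Z)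
    (h0 : ∀ ω, 0 ≤ Z ω) (h1 : ∀ ω, Z ω ≤ 1) :
    ∫ ω, Real.exp (-Z ω) ∂P ≤ Real.exp (-((1 - Real.exp (-1)) * ∫ ω, Z ω ∂P)) := by
  set c := 1 - Real.exp (-1)
  have hZint : Integrable Z P :=
    .of_mem_Icc 0 1 hZ.aemeasurable (.of_forall fun ω => ⟨h0 ω, h1 ω⟩)
  calc ∫ ω, Real.exp (-Z ω) ∂P ≤ ∫ ω, (1 - c * Z ω) ∂P :=
        integral_mono (integrable_exp_neg_of_nonneg hZ h0)
          ((integrable_const 1).sub (hZint.const_mul c))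
          fun ω => Real.exp_neg_le_one_sub_mul (h0 ω) (h1 ω)
    _ = 1 - c * ∫ ω, Z ω ∂P := by
        rw [integral_sub (integrable_const 1) (hZint.const_mul c), integral_const_mul]
        simp
    _ ≤ Real.exp (-(c * ∫ ω, Z ω ∂P)) := by linarith [Real.add_one_le_exp (-(c * ∫ ω, Z ω ∂P))]

lemma summable_integral_of_iIndepFun_of_ae_summable {Z : ℕ → Ω → ℝ} (hZ : ∀ n, Measurable (Z n))
    (hind : iIndepFun Z P) (h0 : ∀ n ω, 0 ≤ Z n ω) (h1 : ∀ n ω, Z n ω ≤ 1)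
    (hsum : ∀ᵐ ω ∂P, Summable fun n => Z n ω) :
    Summable fun n => ∫ ω, Z n ω ∂P := by
  set δ := ∫ ω, Real.exp (-∑' n, Z n ω) ∂P
  have hδ : 0 < δ :=
    integral_exp_pos (integrable_exp_neg_of_nonneg (.tsum hZ) fun ω => tsum_nonneg (h0 · ω))
  set c := 1 - Real.exp (-1)
  have hc : 0 < c := sub_pos.2 (Real.exp_lt_one_iff.2 (by norm_num))
  have hbound : ∀ N, c * ∑ n ∈ range N, ∫ ω, Z n ω ∂P ≤ -Real.log δ := fun N => by
    have : δ ≤ Real.exp (-(c * ∑ n ∈ range N, ∫ ω, Z n ω ∂P)) :=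
      calc δ ≤ ∫ ω, Real.exp (-∑ n ∈ range N, Z n ω) ∂P := by
            refine integral_mono_ae
              (integrable_exp_neg_of_nonneg (.tsum hZ) fun ω => tsum_nonneg (h0 · ω))
              (integrable_exp_neg_of_nonneg (by fun_prop) fun ω => sum_nonneg fun n _ => h0 n ω) ?_
            filter_upwards [hsum] with ω hω
            exact Real.exp_le_exp.2 (neg_le_neg (hω.sum_le_tsum _ fun n _ => h0 n ω))
        _ = ∏ n ∈ range N, ∫ ω, Real.exp (-Z n ω) ∂P := by
            rw [← hind.integral_prod_range_comp hZ (by fun_prop : Measurable (Real.exp <| - ·))]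
            simp_rw [← Real.exp_sum, sum_neg_distrib]
        _ ≤ ∏ n ∈ range N, Real.exp (-(c * ∫ ω, Z n ω ∂P)) :=
            prod_le_prod (fun n _ => integral_nonneg fun ω => (Real.exp_pos _).le)
              fun n _ => integral_exp_neg_le_exp_neg_mul_integral (hZ n) (h0 n) (h1 n)
        _ = Real.exp (-(c * ∑ n ∈ range N, ∫ ω, Z n ω ∂P)) := by
            rw [← Real.exp_sum, mul_sum, sum_neg_distrib]
    have := Real.log_le_log hδ this
    rw [Real.log_exp] at this
    linarith
  exact summable_of_sum_range_le (fun n => integral_nonneg (h0 n))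
    fun N => (le_div_iff₀' hc).2 (hbound N)

theorem summable_rpow_of_ae_summable_rpow_add_mul {p : ℝ} (hp : 0 ≤ p) {a s : ℕ → ℝ}
    {ζ : ℕ → Ω → ℝ} (hζ : ∀ n, Measurable (ζ n)) (hind : iIndepFun ζ P)
    {μ : Measure ℝ} (hlaw : ∀ n, P.map (ζ n) = μ) (hμ : ∀ c, ¬ ∀ᵐ x ∂μ, x = c)
    (hsum : ∀ᵐ ω ∂P, Summable fun n => |a n + s n * ζ n ω| ^ p) :
    (Summable fun n => |a n| ^ p) ∧ Summable fun n => |s n| ^ p := by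
  have : IsProbabilityMeasure μ := hlaw 0 ▸ Measure.isProbabilityMeasure_map (hζ 0).aemeasurable
  set g : ℕ → ℝ → ℝ := fun n x => min (|a n + s n * x| ^ p) 1
  have hg : ∀ n, Measurable (g n) := fun n => by fun_prop
  have hg0 : ∀ n x, 0 ≤ g n x := fun n x => le_min (by positivity) zero_le_one
  have hg1 : ∀ n x, g n x ≤ 1 := fun n x => min_le_right _ _
  have hmean : Summable fun n => ∫ x, g n x ∂μ := by
    refine (summable_integral_of_iIndepFun_of_ae_summable (Z := fun n ω => g n (ζ n ω))
      (fun n => (hg n).comp (hζ n)) (hind.comp g hg) (fun n ω => hg0 n _) (fun n ω => hg1 n _)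
      (hsum.mono fun ω hω => hω.of_nonneg_of_le (fun n => hg0 n _)
        fun n => min_le_left _ _)).congr fun n => ?_
    rw [← hlaw n, integral_map (hζ n).aemeasurable (hg n).aestronglyMeasurable]
  obtain ⟨q, hq, κ, hκ, hlow⟩ := exists_pos_forall_mul_min_rpow_le_integral_min_rpow hμ hp
  set m : ℕ → ℝ := fun n => max |a n| |s n|
  have hm : Summable fun n => m n ^ p := by
    have hκm : Summable fun n => (κ * m n) ^ p :=
      summable_of_summable_min_one (fun n => by positivity)
        ((hmean.div_const q).of_nonneg_of_le (fun n => le_min (by positivity) zero_le_one)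
          fun n => (le_div_iff₀' hq).2 (hlow (a n) (s n)))
    have hsplit : ∀ n, (κ * m n) ^ p = κ ^ p * m n ^ p := fun n =>
      Real.mul_rpow hκ.le (le_max_of_le_left (abs_nonneg _))
    simp_rw [hsplit] at hκm
    exact (summable_mul_left_iff (Real.rpow_pos_of_pos hκ p).ne').1 hκm
  exact ⟨hm.of_nonneg_of_le (fun n => by positivity) fun n => by gcongr; exact le_max_left _ _,
    hm.of_nonneg_of_le (fun n => by positivity) fun n => by gcongr; exact le_max_right _ _⟩

end Independence

-- `η n` stands for the noise `ξ(n+1)` of the recursion.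
theorem lp_summability_converse_volterra_general {Ω : Type*} [MeasurableSpace Ω] (P : Measure Ω)
    [IsProbabilityMeasure P] (d : ℕ) (p : ℝ) (hp : 1 ≤ p)
    (K σmat : ℕ → Matrix (Fin d) (Fin d) ℝ) (f : ℕ → Fin d → ℝ)
    (η : ℕ → Ω → Fin d → ℝ) (hηmeas : ∀ n, Measurable (η n))
    (hindep : iIndepFun η P)
    (ξcomp : Fin d → Ω → ℝ) (hξcompmeas : ∀ j, Measurable (ξcomp j))
    (hD : ∀ j, MemD P (ξcomp j))
    (hdist : ∀ n j, Measure.map (fun ω => η n ω j) P = Measure.map (ξcomp j) P)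
    (hσdiag : ∀ n, (σmat n).IsDiag)
    (hK : ∀ i j, Summable fun n => |K n i j|)
    (X : ℕ → Ω → Fin d → ℝ)
    (hXrec : ∀ n ω, X (n + 1) ω = X n ω
      + (∑ j ∈ Finset.range (n + 1), (K (n - j)).mulVec (X j ω))
      + f n + (σmat n).mulVec (η n ω))
    (hXlp : ∀ᵐ ω ∂P, ∀ i, Summable fun n => |X n ω i| ^ p) :
    (∀ i, Summable fun n => |f n i| ^ p) ∧ (∀ i j, Summable fun n => |σmat n i j| ^ p) := by
  have hp0 : 0 < p := one_pos.trans_le hp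
  have hdiag : ∀ n v i, (σmat n *ᵥ v) i = σmat n i i * v i := fun n v i => by
    conv_lhs => rw [← (hσdiag n).diagonal_diag]
    exact mulVec_diagonal _ _ _
  have hforcing : ∀ i, ∀ᵐ ω ∂P, Summable fun n => |f n i + σmat n i i * η n ω i| ^ p := by
    intro i
    filter_upwards [hXlp] with ω hω
    refine ((memℓp_ofReal_iff hp0).1 (memℓp_sub_sub_sum_range_mulVec hp hK
      (fun l => (memℓp_ofReal_iff hp0).2 (hω l)) i)).congr fun n => ?_
    rw [hXrec n ω, ← hdiag]
    simp only [Pi.sub_apply, Pi.add_apply]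
    congr 2
    ring
  have hcoord : ∀ i, (Summable fun n => |f n i| ^ p) ∧ Summable fun n => |σmat n i i| ^ p :=
    fun i => summable_rpow_of_ae_summable_rpow_add_mul hp0.le
      (fun n => (measurable_pi_apply i).comp (hηmeas n))
      (hindep.comp _ fun _ => measurable_pi_apply i) (hdist · i)
      ((hD i).not_ae_map_eq_const (hξcompmeas i)) (hforcing i)
  refine ⟨fun i => (hcoord i).1, fun i j => ?_⟩
  rcases eq_or_ne i j with rfl | hij
  · exact (hcoord i).2
  · simp [hσdiag _ hij, Real.zero_rpow hp0.ne']

/-- Converse `ℓ^p`-summability for the `d`-dimensional stochastic Volterra summation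
equation `X(n+1) = X(n) + ∑_{j=0}^n K(n−j) X(j) + f(n) + σ(n) ξ(n+1)`, `X(0) = ξ₀`, with
diagonal `σ(n)`, i.i.d. noise `(ξ(n))_{n ≥ 1}` whose components are equal in distribution
to fixed random variables of class `𝔻` (no moment condition), and with the kernel `K` and
the resolvent `R` both in `ℓ¹`:  if `X ∈ ℓ^p` almost surely then `f ∈ ℓ^p` and `σ ∈ ℓ^p`.
(Here `η n` plays the role of `ξ(n+1)`.) -/
theorem lp_summability_converse_volterra {Ω : Type*} [MeasurableSpace Ω] (P : Measure Ω)
    [IsProbabilityMeasure P] (d : ℕ) (p : ℝ) (hp : 1 ≤ p)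
    (K σmat R : ℕ → Matrix (Fin d) (Fin d) ℝ) (f : ℕ → Fin d → ℝ)
    (ξ₀ : Ω → Fin d → ℝ) (hξ₀ : Measurable ξ₀)
    (η : ℕ → Ω → Fin d → ℝ) (hηmeas : ∀ n, Measurable (η n))
    (hindep : iIndepFun η P)
    (hident : ∀ n, Measure.map (η n) P = Measure.map (η 0) P)
    (ξcomp : Fin d → Ω → ℝ) (hξcompmeas : ∀ j, Measurable (ξcomp j))
    (hD : ∀ j, MemD P (ξcomp j))
    (hdist : ∀ n j, Measure.map (fun ω => η n ω j) P = Measure.map (ξcomp j) P)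
    (hσdiag : ∀ n, (σmat n).IsDiag)
    (hK : ∀ i j, Summable fun n => |K n i j|)
    (hR0 : R 0 = 1)
    (hRrec : ∀ n, R (n + 1) = R n + ∑ j ∈ Finset.range (n + 1), K (n - j) * R j)
    (hR : ∀ i j, Summable fun n => |R n i j|)
    (X : ℕ → Ω → Fin d → ℝ)
    (hX0 : ∀ ω, X 0 ω = ξ₀ ω)
    (hXrec : ∀ n ω, X (n + 1) ω = X n ω
      + (∑ j ∈ Finset.range (n + 1), (K (n - j)).mulVec (X j ω))
      + f n + (σmat n).mulVec (η n ω))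
    (hXlp : ∀ᵐ ω ∂P, ∀ i, Summable fun n => |X n ω i| ^ p) :
    (∀ i, Summable fun n => |f n i| ^ p) ∧ (∀ i j, Summable fun n => |σmat n i j| ^ p) :=
  lp_summability_converse_volterra_general P d p hp K σmat f η hηmeas hindep ξcomp hξcompmeas hD
    hdist hσdiag hK X hXrec hXlp
end

section
/- Let (f(n))_{n≥0} and (σ(n))_{n≥0} be deterministic real (scalar) sequences, and let (ξ(n))_{n≥1} be an i.i.d. sequence of real-valued random variables, each equal in distribution to a random variable ξ belonging to the class 𝔻. If for some p ∈ [1, ∞) one has ∑_{n=0}^∞ |f(n) + σ(n)ξ(n+1)|^p < ∞ almost surely, then (f(n)) ∈ ℓ^p(ℤ₊; ℝ) and (σ(n)) ∈ ℓ^p(ℤ₊; ℝ). -/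
/-!
Choose two points `x < y` in the support of the law of `ξ`; they exist because a random variable
in `𝔻` is not almost surely constant (for `ξ = c` a.s. one has `eᵢ = c pᵢ`, so `p₂e₁ - p₁e₂ = 0`).
Around each of them take a compact interval `Kᵢ`, and let `zᵢ(n) ∈ Kᵢ` minimise
`|f(n) + σ(n) z|` over `Kᵢ`. Then `|f(n) + σ(n) zᵢ(n)|^p 1_{ξ(n+1) ∈ Kᵢ}` is a.s. summable, and the
events `{ξ(n+1) ∈ Kᵢ}` are pairwise independent with a common positive probability; a second-moment
(Chebyshev) argument then shows that `∑ₙ |f(n) + σ(n) zᵢ(n)|^p < ∞`. Since `K₁` and `K₂` are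
separated, `σ` and `f` are controlled by the two sequences `f + σ zᵢ`, which lie in `ℓ^p`.
-/

open MeasureTheory ProbabilityTheory Filter Topology Set Finset
open scoped ENNReal

lemma MemD.not_ae_eq_const {Ω : Type*} [MeasurableSpace Ω] {P : Measure Ω} {ξ : Ω → ℝ}
    (hξ : MemD P ξ) (c : ℝ) : ¬ ξ =ᵐ[P] fun _ => c := by
  intro hc
  obtain ⟨B₁, B₂, -, -, -, -, -, -, -, -, -, hdet⟩ := hξ
  have hint : ∀ B : Set ℝ, ∫ ω in ξ ⁻¹' B, ξ ω ∂P = (P (ξ ⁻¹' B)).toReal * c := fun B => by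
    rw [integral_congr_ae (ae_restrict_of_ae hc), setIntegral_const, smul_eq_mul, measureReal_def]
  exact hdet (by rw [hint, hint]; ring)

lemma MeasureTheory.Measure.exists_lt_mem_support {X : Type*} [TopologicalSpace X]
    [MeasurableSpace X] [HereditarilyLindelofSpace X] [LinearOrder X] {μ : Measure X} (hμ : μ ≠ 0)
    (h : ∀ c, ¬ ∀ᵐ x ∂μ, x = c) : ∃ x ∈ μ.support, ∃ y ∈ μ.support, x < y := by
  obtain ⟨x, hx⟩ := Measure.nonempty_support hμ
  by_contra! hxy
  refine h x (measure_mono_null (t := μ.supportᶜ) (fun y hy hys => hy ?_) μ.measure_compl_support)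
  exact le_antisymm (hxy x hx y hys) (hxy y hys x hx)

lemma memℓp_ofReal_iff_summable {α : Type*} {f : α → ℝ} {p : ℝ} (hp : 0 < p) :
    Memℓp f (ENNReal.ofReal p) ↔ Summable fun i => |f i| ^ p := by
  rw [memℓp_gen_iff (by rwa [ENNReal.toReal_ofReal hp.le]), ENNReal.toReal_ofReal hp.le]
  simp only [Real.norm_eq_abs]

lemma Memℓp.of_affine_pair {α : Type*} {p : ℝ≥0∞} {f σ z₁ z₂ : α → ℝ} {γ R : ℝ} (hγ : 0 < γ)
    (hgap : ∀ i, z₁ i + γ ≤ z₂ i) (hR : ∀ i, |z₁ i| ≤ R)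
    (h₁ : Memℓp (fun i => f i + σ i * z₁ i) p) (h₂ : Memℓp (fun i => f i + σ i * z₂ i) p) :
    Memℓp f p ∧ Memℓp σ p := by
  have hσ : Memℓp σ p := ((h₁.norm.add h₂.norm).const_mul γ⁻¹).mono fun i => by
    rw [Real.norm_eq_abs, le_inv_mul_iff₀ hγ]
    calc γ * |σ i| ≤ (z₂ i - z₁ i) * |σ i| := by gcongr; linarith [hgap i]
      _ = |σ i * (z₂ i - z₁ i)| := by
        rw [abs_mul, abs_of_nonneg (by linarith [hgap i] : (0 : ℝ) ≤ z₂ i - z₁ i), mul_comm]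
      _ = |(f i + σ i * z₂ i) - (f i + σ i * z₁ i)| := by ring_nf
      _ ≤ ‖f i + σ i * z₁ i‖ + ‖f i + σ i * z₂ i‖ := by
        simp only [Real.norm_eq_abs]; exact (abs_sub _ _).trans_eq (add_comm _ _)
  refine ⟨(h₁.norm.add (hσ.norm.const_mul R)).mono fun i => ?_, hσ⟩
  simp only [Pi.add_apply, Real.norm_eq_abs]
  calc |f i| = |(f i + σ i * z₁ i) - σ i * z₁ i| := by ring_nf
    _ ≤ |f i + σ i * z₁ i| + |σ i| * |z₁ i| := (abs_sub _ _).trans_eq (by rw [abs_mul])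
    _ ≤ |f i + σ i * z₁ i| + R * |σ i| := by rw [mul_comm R]; gcongr; exact hR i

lemma summable_of_summable_min_one_s4 {c : ℕ → ℝ} (hc : ∀ n, 0 ≤ c n)
    (h : Summable fun n => min (c n) 1) : Summable c := by
  refine Summable.of_norm_bounded_eventually h ?_
  filter_upwards [h.tendsto_cofinite_zero.eventually (gt_mem_nhds one_pos)] with n hn
  have hc1 : c n < 1 := (min_lt_iff.1 hn).resolve_right (lt_irrefl 1)
  rw [Real.norm_eq_abs, abs_of_nonneg (hc n), min_eq_left hc1.le]

section PairwiseIndependent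

variable {Ω : Type*} [MeasurableSpace Ω] {P : Measure Ω}

lemma variance_le_integral_of_mem_Icc [IsProbabilityMeasure P] {X : Ω → ℝ}
    (hX : AEStronglyMeasurable X P) (h01 : ∀ ω, X ω ∈ Icc (0 : ℝ) 1) :
    variance X P ≤ P[X] :=
  calc variance X P ≤ P[X ^ 2] := variance_le_expectation_sq hX
    _ ≤ P[X] := by
      refine integral_mono_of_nonneg (ae_of_all _ fun ω => sq_nonneg (X ω))
        (Integrable.of_bound hX 1 (ae_of_all _ fun ω => ?_)) (ae_of_all _ fun ω => ?_)
      · simpa [abs_of_nonneg (h01 ω).1] using (h01 ω).2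
      · simpa [sq] using mul_le_of_le_one_left (h01 ω).1 (h01 ω).2

lemma measure_le_le_four_div_of_variance_le [IsFiniteMeasure P] {S : Ω → ℝ} (hS : MemLp S 2 P)
    (hvar : variance S P ≤ P[S]) {C : ℝ} (hm : 0 < P[S]) (hC : 2 * C ≤ P[S]) :
    P {ω | S ω ≤ C} ≤ ENNReal.ofReal (4 / P[S]) := by
  have hsub : {ω | S ω ≤ C} ⊆ {ω | P[S] / 2 ≤ |S ω - P[S]|} := fun ω hω => by
    simp only [mem_ofPred_eq] at hω ⊢
    rw [abs_sub_comm]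
    exact (by linarith : P[S] / 2 ≤ P[S] - S ω).trans (le_abs_self _)
  refine (measure_mono hsub).trans ((meas_ge_le_variance_div_sq hS (by positivity)).trans ?_)
  refine ENNReal.ofReal_le_ofReal ?_
  calc variance S P / (P[S] / 2) ^ 2 ≤ P[S] / (P[S] / 2) ^ 2 := by gcongr
    _ = 4 / P[S] := by field_simp; ring

-- `Var S_N ≤ E S_N → ∞`, so by Chebyshev `S_N ≥ E S_N / 2` with probability tending to one.
theorem summable_integral_of_ae_summable [IsProbabilityMeasure P] {X : ℕ → Ω → ℝ}
    (hX : ∀ n, Measurable (X n)) (h01 : ∀ n ω, X n ω ∈ Icc (0 : ℝ) 1)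
    (hindep : Pairwise fun m n => IndepFun (X m) (X n) P)
    (hsum : ∀ᵐ ω ∂P, Summable fun n => X n ω) :
    Summable fun n => P[X n] := by
  by_contra hdiv
  set S : ℕ → Ω → ℝ := fun N => ∑ n ∈ range N, X n with hS
  have hL2 : ∀ n, MemLp (X n) 2 P := fun n =>
    MemLp.of_bound (hX n).aestronglyMeasurable 1
      (ae_of_all _ fun ω => by simpa [abs_of_nonneg (h01 n ω).1] using (h01 n ω).2)
  have hmean : ∀ N, P[S N] = ∑ n ∈ range N, P[X n] := fun N => by
    simp only [hS, Finset.sum_apply]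
    exact integral_finsetSum _ fun n _ => (hL2 n).integrable one_le_two
  have hvar : ∀ N, variance (S N) P ≤ P[S N] := fun N => by
    rw [hS, IndepFun.variance_sum (fun n _ => hL2 n) fun m _ n _ hmn => hindep hmn, ← hS, hmean]
    exact sum_le_sum fun n _ =>
      variance_le_integral_of_mem_Icc (hX n).aestronglyMeasurable (h01 n)
  have hmean_top : Tendsto (fun N => P[S N]) atTop atTop := by
    simp_rw [hmean]
    exact (not_summable_iff_tendsto_nat_atTop_of_nonneg
      fun n => integral_nonneg fun ω => (h01 n ω).1).1 hdiv
  have hbdd_null : ∀ C : ℕ, P {ω | ∀ N, S N ω ≤ C} = 0 := fun C => by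
    have hlim : Tendsto (fun N => ENNReal.ofReal (4 / P[S N])) atTop (𝓝 0) := by
      simpa using ENNReal.tendsto_ofReal (hmean_top.const_div_atTop 4)
    refine le_antisymm (ge_of_tendsto hlim ?_) bot_le
    filter_upwards [hmean_top.eventually_ge_atTop (2 * C), hmean_top.eventually_gt_atTop 0]
      with N hC hpos
    exact (measure_mono (ofPred_subset_ofPred.2 fun ω hω => hω N)).trans
      (measure_le_le_four_div_of_variance_le (memLp_finsetSum' _ fun n _ => hL2 n) (hvar N) hpos hC)
  have hunbdd : ∀ᵐ ω ∂P, ∀ C : ℕ, ¬ ∀ N, S N ω ≤ C :=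
    ae_all_iff.2 fun C => measure_eq_zero_iff_ae_notMem.1 (hbdd_null C)
  obtain ⟨ω, hω, hunb⟩ := (hsum.and hunbdd).exists
  refine hunb ⌈∑' n, X n ω⌉₊ fun N => ?_
  simpa [hS] using (hω.sum_le_tsum (range N) fun n _ => (h01 n ω).1).trans (Nat.le_ceil _)

theorem summable_of_ae_summable_comp [IsProbabilityMeasure P] {β : Type*} [MeasurableSpace β]
    {η : ℕ → Ω → β} (hη : ∀ n, Measurable (η n))
    (hindep : Pairwise fun m n => IndepFun (η m) (η n) P)
    {K : Set β} (hK : MeasurableSet K) {δ : ℝ} (hδ : 0 < δ) (hKδ : ∀ n, δ ≤ P.real (η n ⁻¹' K))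
    {g : ℕ → β → ℝ} (hg : ∀ n y, 0 ≤ g n y) (hsum : ∀ᵐ ω ∂P, Summable fun n => g n (η n ω))
    {c : ℕ → ℝ} (hc : ∀ n, 0 ≤ c n) (hcg : ∀ n, ∀ y ∈ K, c n ≤ g n y) :
    Summable c := by
  set X : ℕ → Ω → ℝ := fun n => (η n ⁻¹' K).indicator fun _ => min (c n) 1 with hX
  have hX01 : ∀ n ω, X n ω ∈ Icc (0 : ℝ) 1 := fun n ω => by
    by_cases h : η n ω ∈ K <;> simp [hX, h, hc n]
  have hXsum : ∀ᵐ ω ∂P, Summable fun n => X n ω := hsum.mono fun ω hω =>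
    hω.of_nonneg_of_le (fun n => (hX01 n ω).1) fun n => by
      by_cases h : η n ω ∈ K
      · simpa [hX, h] using (min_le_left _ _).trans (hcg n _ h)
      · simpa [hX, h] using hg n (η n ω)
  have hEX : ∀ n, P[X n] = min (c n) 1 * P.real (η n ⁻¹' K) := fun n => by
    rw [hX, integral_indicator_const _ (hη n hK), smul_eq_mul, mul_comm]
  have hXindep : Pairwise fun m n => IndepFun (X m) (X n) P := fun m n hmn =>
    (hindep hmn).comp (measurable_const.indicator hK) (measurable_const.indicator hK)
  have hmin : Summable fun n => min (c n) 1 := by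
    refine ((summable_integral_of_ae_summable (fun n => measurable_const.indicator (hη n hK))
      hX01 hXindep hXsum).div_const δ).of_nonneg_of_le (fun n => le_min (hc n) zero_le_one)
      fun n => ?_
    rw [hEX, le_div_iff₀ hδ]
    exact mul_le_mul_of_nonneg_left (hKδ n) (le_min (hc n) zero_le_one)
  exact summable_of_summable_min_one_s4 hc hmin

theorem exists_summable_affine_of_ae_summable [IsProbabilityMeasure P] {η : ℕ → Ω → ℝ}
    (hη : ∀ n, Measurable (η n)) (hindep : Pairwise fun m n => IndepFun (η m) (η n) P)
    {K : Set ℝ} (hK : IsCompact K) {δ : ℝ} (hδ : 0 < δ) (hKδ : ∀ n, δ ≤ P.real (η n ⁻¹' K))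
    {p : ℝ} (hp : 0 ≤ p) {f σ : ℕ → ℝ}
    (hsum : ∀ᵐ ω ∂P, Summable fun n => |f n + σ n * η n ω| ^ p) :
    ∃ z : ℕ → ℝ, (∀ n, z n ∈ K) ∧ Summable fun n => |f n + σ n * z n| ^ p := by
  have hKne : K.Nonempty := by
    by_contra hK
    simpa [not_nonempty_iff_eq_empty.1 hK] using hδ.trans_le (hKδ 0)
  have hmin : ∀ n, ∃ z ∈ K, IsMinOn (fun y => |f n + σ n * y|) K z := fun n =>
    hK.exists_isMinOn hKne (by fun_prop)
  choose z hzK hzmin using hmin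
  refine ⟨z, hzK, summable_of_ae_summable_comp hη hindep hK.measurableSet hδ hKδ
    (g := fun n y => |f n + σ n * y| ^ p) (fun n y => by positivity) hsum (fun n => by positivity)
    fun n y hy => Real.rpow_le_rpow (abs_nonneg _) (hzmin n hy) hp⟩

end PairwiseIndependent

/-- Lemma on the `p`-summability of perturbations: if `(ξ(n))_{n ≥ 1}` is an i.i.d. sequence
of real random variables, each equal in distribution to `ξ ∈ 𝔻`, and
`∑ₙ |f(n) + σ(n) ξ(n+1)|^p < ∞` almost surely for some `p ∈ [1, ∞)`, then
`f, σ ∈ ℓ^p(ℤ₊; ℝ)`.  (Here `η n` plays the role of `ξ(n+1)`.) -/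
theorem summability_converse {Ω : Type*} [MeasurableSpace Ω] (P : Measure Ω)
    [IsProbabilityMeasure P] (p : ℝ) (hp : 1 ≤ p)
    (f σ : ℕ → ℝ) (ξ : Ω → ℝ) (hξmeas : Measurable ξ) (hξD : MemD P ξ)
    (η : ℕ → Ω → ℝ) (hηmeas : ∀ n, Measurable (η n))
    (hindep : iIndepFun η P)
    (hident : ∀ n, Measure.map (η n) P = Measure.map ξ P)
    (hsum : ∀ᵐ ω ∂P, Summable fun n => |f n + σ n * η n ω| ^ p) :
    (Summable fun n => |f n| ^ p) ∧ (Summable fun n => |σ n| ^ p) := by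
  have hp0 : 0 < p := zero_lt_one.trans_le hp
  set μ := P.map ξ
  have : IsProbabilityMeasure μ := Measure.isProbabilityMeasure_map hξmeas.aemeasurable
  obtain ⟨x, hx, y, hy, hxy⟩ : ∃ x ∈ μ.support, ∃ y ∈ μ.support, x < y :=
    Measure.exists_lt_mem_support (IsProbabilityMeasure.ne_zero μ) fun c hc =>
      hξD.not_ae_eq_const c (ae_of_ae_map hξmeas.aemeasurable hc)
  set ε := (y - x) / 3
  have hε : 0 < ε := by simp only [ε]; linarith
  have hnear : ∀ a ∈ μ.support, ∃ z : ℕ → ℝ, (∀ n, z n ∈ Icc (a - ε) (a + ε)) ∧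
      Memℓp (fun n => f n + σ n * z n) (ENNReal.ofReal p) := fun a ha => by
    simp only [memℓp_ofReal_iff_summable hp0]
    have hpos := (Measure.mem_support_iff_forall a).1 ha _
      (Icc_mem_nhds (by linarith : a - ε < a) (by linarith : a < a + ε))
    refine exists_summable_affine_of_ae_summable hηmeas (fun m n h => hindep.indepFun h)
      isCompact_Icc (ENNReal.toReal_pos hpos.ne' (measure_ne_top _ _)) (fun n => ?_) hp0.le hsum
    rw [measureReal_def, ← Measure.map_apply (hηmeas n) measurableSet_Icc, hident n]
  obtain ⟨z₁, hz₁, h₁⟩ := hnear x hx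
  obtain ⟨z₂, hz₂, h₂⟩ := hnear y hy
  have hgap : ∀ n, z₁ n + ε ≤ z₂ n := fun n => by
    linarith [(hz₁ n).2, (hz₂ n).1, (by simp only [ε]; ring : x + ε + ε = y - ε)]
  have hbound : ∀ n, |z₁ n| ≤ |x| + ε := fun n => by
    rw [abs_le]; constructor <;> linarith [(hz₁ n).1, (hz₁ n).2, neg_abs_le x, le_abs_self x]
  simpa only [memℓp_ofReal_iff_summable hp0] using Memℓp.of_affine_pair hε hgap hbound h₁ h₂
end

section
/- Let (f(n))_{n≥0} and (σ(n))_{n≥0} be deterministic real sequences, and let (ξ(n))_{n≥1} be an i.i.d. sequence of real-valued random variables, each equal in distribution to a random variable ξ belonging to the class 𝔻. If for some p ∈ [1, ∞) one has ∑_{n=0}^∞ |f(n) + σ(n)ξ(n+1)|^p < ∞ almost surely, then σ(n) → 0 and f(n) → 0 as n → ∞. -/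
/-!
If `ξ = y` almost surely then `eᵢ = pᵢ y`, so `p₂e₁ − p₁e₂ = 0`: a variable of class `𝔻` is not
a.s. constant. Two distinct points `a, b` of the support of its law then give `r, c > 0` with
`P[ξ ∉ B̄(x, r)] ≥ c` for every `x`, because `B̄(x, r)` misses `B(a, r)` or `B(b, r)` when
`r = d(a, b)/4`.

Summability makes `Xₙ = f(n) + σ(n) ξ(n+1)` tend to `0` a.s., hence in probability. If
`|σ(n)| ≥ ε`, then `|Xₙ| < εr` forces `ξ(n+1) ∈ B̄(−f(n)/σ(n), r)`, which has probability at most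
`1 − c`; so `σ → 0`. Finally, choosing `M` with `P[|ξ| ≤ M] > 1/2`, for large `n` some `ω` has
`|Xₙ(ω)| < δ/2` and `|σ(n) ξ(n+1)(ω)| < δ/2`, whence `|f(n)| < δ`.
-/

open MeasureTheory ProbabilityTheory Filter
open scoped ENNReal

lemma tendsto_zero_of_summable_abs_rpow {x : ℕ → ℝ} {p : ℝ} (hp : 0 < p)
    (h : Summable fun n => |x n| ^ p) : Tendsto x atTop (nhds 0) := by
  have hroot := h.tendsto_atTop_zero.rpow_const (Or.inr (inv_nonneg.2 hp.le))
  rw [Real.zero_rpow (inv_ne_zero hp.ne')] at hroot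
  refine (tendsto_zero_iff_abs_tendsto_zero x).2 (hroot.congr fun n => ?_)
  exact Real.rpow_rpow_inv (abs_nonneg _) hp.ne'

lemma mul_le_abs_add_mul_of_notMem_closedBall {a b y ε r : ℝ} (hε : ε ≤ |b|) (hr : 0 ≤ r)
    (hy : y ∉ Metric.closedBall (-a / b) r) : ε * r ≤ |a + b * y| := by
  rcases eq_or_ne b 0 with rfl | hb
  · rw [abs_zero] at hε
    exact (mul_nonpos_of_nonpos_of_nonneg hε hr).trans (abs_nonneg _)
  rw [Metric.mem_closedBall, Real.dist_eq, not_le] at hy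
  have hfactor : a + b * y = b * (y - -a / b) := by field_simp; ring
  calc ε * r ≤ |b| * |y - -a / b| := mul_le_mul hε hy.le hr (abs_nonneg b)
    _ = |a + b * y| := by rw [hfactor, abs_mul]

section

variable {Ω : Type*} [MeasurableSpace Ω] {P : Measure Ω}

theorem MemD.frequently_ne {ξ : Ω → ℝ} (hξ : Measurable ξ) (h : MemD P ξ) (y : ℝ) :
    ∃ᵐ ω ∂P, ξ ω ≠ y := by
  obtain ⟨B₁, B₂, hB₁, hB₂, -, -, -, -, -, -, -, hdet⟩ := h
  by_contra hne
  have hconst : ∀ᵐ ω ∂P, ξ ω = y := by simpa using not_frequently.1 hne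
  have hint : ∀ B, MeasurableSet B → ∫ ω in ξ ⁻¹' B, ξ ω ∂P = (P (ξ ⁻¹' B)).toReal * y :=
    fun B hB => by
      rw [setIntegral_congr_ae (hξ hB) (hconst.mono fun ω hω _ => hω), setIntegral_const,
        smul_eq_mul, Measure.real]
  exact hdet (by rw [hint _ hB₁, hint _ hB₂]; ring)

theorem exists_forall_le_measure_preimage_compl_closedBall {β : Type*} [MetricSpace β]
    [SecondCountableTopology β] [Nonempty β] {ξ : Ω → β} (h : ∀ y, ∃ᵐ ω ∂P, ξ ω ≠ y) :
    ∃ r > 0, ∃ c > 0, ∀ x, c ≤ P (ξ ⁻¹' (Metric.closedBall x r)ᶜ) := by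
  obtain ⟨a, b, hab, ha, hb⟩ := exists_ne_forall_mem_nhds_pos_measure_preimage h
  set r := dist a b / 4 with hr_def
  have hr : 0 < r := by have := dist_pos.2 hab; positivity
  refine ⟨r, hr, min (P (ξ ⁻¹' Metric.ball a r)) (P (ξ ⁻¹' Metric.ball b r)),
    lt_min (ha _ (Metric.ball_mem_nhds a hr)) (hb _ (Metric.ball_mem_nhds b hr)), fun x => ?_⟩
  have hball : ∀ z, r + r ≤ dist x z →
      P (ξ ⁻¹' Metric.ball z r) ≤ P (ξ ⁻¹' (Metric.closedBall x r)ᶜ) := fun z hz =>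
    measure_mono (Set.preimage_mono (Metric.closedBall_disjoint_ball hz).subset_compl_left)
  rcases le_or_gt (r + r) (dist x a) with hxa | hxa
  · exact (min_le_left _ _).trans (hball a hxa)
  · refine (min_le_right _ _).trans (hball b ?_)
    linarith [dist_triangle_left a b x]

lemma exists_lt_measure_preimage_closedBall {β : Type*} [PseudoMetricSpace β] (ξ : Ω → β)
    (x : β) {t : ℝ≥0∞} (ht : t < P Set.univ) : ∃ M : ℝ, t < P (ξ ⁻¹' Metric.closedBall x M) := by
  have hmono : Monotone fun n : ℕ => ξ ⁻¹' Metric.closedBall x n := fun i j hij =>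
    Set.preimage_mono (Metric.closedBall_subset_closedBall (by exact_mod_cast hij))
  have hlim := tendsto_measure_iUnion_atTop (μ := P) hmono
  rw [← Set.preimage_iUnion, Metric.iUnion_closedBall_nat, Set.preimage_univ] at hlim
  obtain ⟨n, hn⟩ := (hlim.eventually (lt_mem_nhds ht)).exists
  exact ⟨n, hn⟩

variable {f σ : ℕ → ℝ} {ξ : Ω → ℝ} {η : ℕ → Ω → ℝ}

theorem tendsto_scale_zero_of_tendstoInMeasure_add_mul (hident : ∀ n, IdentDistrib (η n) ξ P P)
    (hξ : ∀ y, ∃ᵐ ω ∂P, ξ ω ≠ y)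
    (hX : TendstoInMeasure P (fun n ω => f n + σ n * η n ω) atTop 0) :
    Tendsto σ atTop (nhds 0) := by
  obtain ⟨r, hr, c, hc, hconc⟩ := exists_forall_le_measure_preimage_compl_closedBall hξ
  have hmass : ∀ ε n, ε ≤ |σ n| → c ≤ P {ω | ε * r ≤ dist (f n + σ n * η n ω) 0} := by
    intro ε n hε
    calc c ≤ P (ξ ⁻¹' (Metric.closedBall (-f n / σ n) r)ᶜ) := hconc _
      _ = P (η n ⁻¹' (Metric.closedBall (-f n / σ n) r)ᶜ) :=
        ((hident n).measure_mem_eq Metric.isClosed_closedBall.measurableSet.compl).symm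
      _ ≤ _ := measure_mono fun ω hω => by
        simpa [Real.dist_eq] using mul_le_abs_add_mul_of_notMem_closedBall hε hr.le hω
  rw [Metric.tendsto_atTop]
  intro ε hε
  obtain ⟨N, hN⟩ := eventually_atTop.1 <|
    (tendstoInMeasure_iff_dist.1 hX (ε * r) (by positivity)).eventually (gt_mem_nhds hc)
  refine ⟨N, fun n hn => ?_⟩
  rw [Real.dist_eq, sub_zero]
  by_contra! hσn
  exact (hN n hn).not_ge (hmass ε n hσn)

theorem tendsto_shift_zero_of_tendstoInMeasure_add_mul [IsProbabilityMeasure P]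
    (hident : ∀ n, IdentDistrib (η n) ξ P P) (hσ : Tendsto σ atTop (nhds 0))
    (hX : TendstoInMeasure P (fun n ω => f n + σ n * η n ω) atTop 0) :
    Tendsto f atTop (nhds 0) := by
  obtain ⟨M, hM⟩ := exists_lt_measure_preimage_closedBall (P := P) ξ 0
    (t := 1 / 2) (by rw [measure_univ]; norm_num)
  rw [Metric.tendsto_atTop]
  intro δ hδ
  have hσM : ∀ᶠ n in atTop, |σ n| * M < δ / 2 := by
    have := (hσ.abs.mul_const M).eventually (gt_mem_nhds (show (|0| * M : ℝ) < δ / 2 by simpa))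
    simpa using this
  have hXn : ∀ᶠ n in atTop, P {ω | δ / 2 ≤ dist (f n + σ n * η n ω) 0} < 1 / 2 :=
    (tendstoInMeasure_iff_dist.1 hX (δ / 2) (by positivity)).eventually
      (gt_mem_nhds (by norm_num))
  obtain ⟨N, hN⟩ := eventually_atTop.1 (hσM.and hXn)
  refine ⟨N, fun n hn => ?_⟩
  obtain ⟨hσn, hXn⟩ := hN n hn
  obtain ⟨ω, hηω, hXω⟩ : ∃ ω, |η n ω| ≤ M ∧ |f n + σ n * η n ω| < δ / 2 := by
    by_contra! hnone
    have hsub : η n ⁻¹' Metric.closedBall 0 M ⊆ {ω | δ / 2 ≤ dist (f n + σ n * η n ω) 0} :=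
      fun ω hω => by simpa [Real.dist_eq] using hnone ω (by simpa using hω)
    have := (measure_mono hsub).trans_lt hXn
    rw [(hident n).measure_mem_eq Metric.isClosed_closedBall.measurableSet] at this
    exact (hM.trans this).false
  rw [Real.dist_eq, sub_zero]
  calc |f n| ≤ |f n + σ n * η n ω| + |σ n| * |η n ω| := by
        simpa [abs_mul, add_comm] using abs_sub_le (f n) (f n + σ n * η n ω) 0
    _ < δ / 2 + δ / 2 :=
        add_lt_add_of_lt_of_le hXω ((mul_le_mul_of_nonneg_left hηω (abs_nonneg _)).trans hσn.le)
    _ = δ := add_halves δ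

end

theorem perturbations_tendsto_zero_general {Ω : Type*} [MeasurableSpace Ω] (P : Measure Ω)
    [IsProbabilityMeasure P] (p : ℝ) (hp : 1 ≤ p)
    (f σ : ℕ → ℝ) (ξ : Ω → ℝ) (hξmeas : Measurable ξ) (hξD : MemD P ξ)
    (η : ℕ → Ω → ℝ) (hηmeas : ∀ n, Measurable (η n))
    (hident : ∀ n, Measure.map (η n) P = Measure.map ξ P)
    (hsum : ∀ᵐ ω ∂P, Summable fun n => |f n + σ n * η n ω| ^ p) :
    Tendsto σ atTop (nhds 0) ∧ Tendsto f atTop (nhds 0) := by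
  have hlaw : ∀ n, IdentDistrib (η n) ξ P P := fun n =>
    ⟨(hηmeas n).aemeasurable, hξmeas.aemeasurable, hident n⟩
  have hX : TendstoInMeasure P (fun n ω => f n + σ n * η n ω) atTop 0 :=
    tendstoInMeasure_of_tendsto_ae (fun n => by fun_prop)
      (hsum.mono fun ω hω => tendsto_zero_of_summable_abs_rpow (by linarith) hω)
  have hσ := tendsto_scale_zero_of_tendstoInMeasure_add_mul hlaw (hξD.frequently_ne hξmeas) hX
  exact ⟨hσ, tendsto_shift_zero_of_tendstoInMeasure_add_mul hlaw hσ hX⟩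

/-- If `(ξ(n))_{n ≥ 1}` is an i.i.d. sequence of real random variables, each equal in
distribution to `ξ ∈ 𝔻`, and `∑ₙ |f(n) + σ(n) ξ(n+1)|^p < ∞` almost surely for some
`p ∈ [1, ∞)`, then `σ(n) → 0` and `f(n) → 0` as `n → ∞`.
(Here `η n` plays the role of `ξ(n+1)`.) -/
theorem perturbations_tendsto_zero {Ω : Type*} [MeasurableSpace Ω] (P : Measure Ω)
    [IsProbabilityMeasure P] (p : ℝ) (hp : 1 ≤ p)
    (f σ : ℕ → ℝ) (ξ : Ω → ℝ) (hξmeas : Measurable ξ) (hξD : MemD P ξ)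
    (η : ℕ → Ω → ℝ) (hηmeas : ∀ n, Measurable (η n))
    (hindep : iIndepFun η P)
    (hident : ∀ n, Measure.map (η n) P = Measure.map ξ P)
    (hsum : ∀ᵐ ω ∂P, Summable fun n => |f n + σ n * η n ω| ^ p) :
    Tendsto σ atTop (nhds 0) ∧ Tendsto f atTop (nhds 0) :=
  perturbations_tendsto_zero_general P p hp f σ ξ hξmeas hξD η hηmeas hident hsum
end

section
/- Let (f(n))_{n≥0} and (σ(n))_{n≥0} be deterministic real sequences, let ξ be a real-valued random variable, and let (ξ(n))_{n≥1} be an i.i.d. sequence of real-valued random variables, each equal in distribution to ξ. If f(n) + σ(n)ξ(n+1) → 0 as n → ∞ almost surely, then f(n) + σ(n)ξ → 0 as n → ∞ almost surely. -/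
/-!
Let `μ` be the law of `ξ`. The second Borel–Cantelli lemma, applied along an arbitrary infinite
set of indices, shows that for every Borel set `B` with `μ B > 0` the values `f n + σ n * x`,
`x ∈ B`, eventually come arbitrarily close to `0`. If `μ` is a Dirac mass at `c`, taking
`B = {c}` gives the claim. Otherwise the support of `μ` contains two distinct points, and small
balls around them are separated sets of positive measure; this forces `σ n → 0`, hence
`f n → 0`, so that `f n + σ n * x → 0` for every `x`.
-/

open MeasureTheory ProbabilityTheory Filter Set Metric Topology
open scoped ENNReal

section IID

variable {Ω E : Type*} [MeasurableSpace Ω] [MeasurableSpace E] {P : Measure Ω}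
  [IsProbabilityMeasure P] {η : ℕ → Ω → E} {μ : Measure E}

lemma ae_frequently_and_mem_of_iIndepFun (hη : ∀ n, Measurable (η n)) (hindep : iIndepFun η P)
    (hident : ∀ n, P.map (η n) = μ) {B : Set E} (hB : MeasurableSet B) (hμB : μ B ≠ 0)
    {p : ℕ → Prop} (hp : ∃ᶠ n in atTop, p n) :
    ∀ᵐ ω ∂P, ∃ᶠ n in atTop, p n ∧ η n ω ∈ B := by
  have hB' : ∀ n, MeasurableSet ({_x | p n} ∩ B) := fun n => (MeasurableSet.const _).inter hB
  set s : ℕ → Set Ω := fun n => η n ⁻¹' ({_x | p n} ∩ B)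
  have hs : ∀ n, MeasurableSet (s n) := fun n => hη n (hB' n)
  have hs_indep : iIndepSet s P := (iIndepSet_iff_meas_biInter hs).2 fun S =>
    hindep.measure_inter_preimage_eq_mul S fun n _ => hB' n
  have hPs : ∀ n, P (s n) = {n | p n}.indicator (fun _ => μ B) n := fun n => by
    by_cases hpn : p n <;> simp [s, hpn, ← hident n, Measure.map_apply (hη n) hB]
  have : Infinite {n | p n} := (Nat.frequently_atTop_iff_infinite.1 hp).to_subtype
  have hsum : ∑' n, P (s n) = ∞ := by
    rw [tsum_congr hPs, ← tsum_subtype]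
    exact ENNReal.tsum_const_eq_top_of_ne_zero hμB
  filter_upwards [(mem_ae_iff_prob_eq_one (MeasurableSet.measurableSet_limsup hs)).2
    (measure_limsup_eq_one hs hs_indep hsum)] with ω hω
  exact mem_limsup_iff_frequently_mem.1 hω

lemma eventually_exists_mem_of_ae_tendsto {F : Type*} {g : ℕ → E → F} {l : Filter F}
    (hη : ∀ n, Measurable (η n)) (hindep : iIndepFun η P) (hident : ∀ n, P.map (η n) = μ)
    {B : Set E} (hB : MeasurableSet B) (hμB : μ B ≠ 0)
    (htends : ∀ᵐ ω ∂P, Tendsto (fun n => g n (η n ω)) atTop l) {U : Set F} (hU : U ∈ l) :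
    ∀ᶠ n in atTop, ∃ x ∈ B, g n x ∈ U := by
  by_contra hfreq
  obtain ⟨ω, hfreq_ω, htends_ω⟩ := ((ae_frequently_and_mem_of_iIndepFun hη hindep hident hB hμB
    (not_eventually.1 hfreq)).and htends).exists
  obtain ⟨n, ⟨hn, hmem⟩, hnU⟩ := (hfreq_ω.and_eventually (htends_ω hU)).exists
  exact hn ⟨η n ω, hmem, hnU⟩

end IID

section Affine

variable {f σ : ℕ → ℝ}

lemma tendsto_zero_of_separated {A B : Set ℝ} {d : ℝ} (hd : 0 < d)
    (hAB : ∀ x ∈ A, ∀ y ∈ B, d ≤ dist x y)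
    (hA : ∀ U ∈ 𝓝 (0 : ℝ), ∀ᶠ n in atTop, ∃ x ∈ A, f n + σ n * x ∈ U)
    (hB : ∀ U ∈ 𝓝 (0 : ℝ), ∀ᶠ n in atTop, ∃ y ∈ B, f n + σ n * y ∈ U) :
    Tendsto σ atTop (𝓝 0) := by
  refine Metric.tendsto_nhds.2 fun ε hε => ?_
  have hδ : 0 < ε * d / 2 := by positivity
  filter_upwards [hA _ (ball_mem_nhds 0 hδ), hB _ (ball_mem_nhds 0 hδ)]
    with n ⟨x, hx, hfx⟩ ⟨y, hy, hfy⟩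
  rw [mem_ball_zero_iff, Real.norm_eq_abs] at hfx hfy
  rw [dist_zero_right, Real.norm_eq_abs]
  have : |σ n| * d < ε * d := calc
    |σ n| * d ≤ |σ n| * |x - y| := by
      gcongr; rw [← Real.dist_eq]; exact hAB x hx y hy
    _ = |(f n + σ n * x) - (f n + σ n * y)| := by rw [← abs_mul]; ring_nf
    _ ≤ |f n + σ n * x| + |f n + σ n * y| := abs_sub _ _
    _ < ε * d := by linarith
  exact lt_of_mul_lt_mul_right this hd.le

lemma tendsto_zero_of_isBounded {B : Set ℝ} (hB : Bornology.IsBounded B)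
    (hσ : Tendsto σ atTop (𝓝 0))
    (hfB : ∀ U ∈ 𝓝 (0 : ℝ), ∀ᶠ n in atTop, ∃ x ∈ B, f n + σ n * x ∈ U) :
    Tendsto f atTop (𝓝 0) := by
  obtain ⟨M, hM⟩ := isBounded_iff_forall_norm_le.1 hB
  have hσM : Tendsto (fun n => |σ n| * M) atTop (𝓝 0) := by
    simpa using hσ.abs.mul_const M
  refine Metric.tendsto_nhds.2 fun ε hε => ?_
  filter_upwards [hfB _ (ball_mem_nhds 0 (half_pos hε)),
    hσM.eventually (gt_mem_nhds (half_pos hε))] with n ⟨x, hx, hfx⟩ hσn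
  rw [mem_ball_zero_iff, Real.norm_eq_abs] at hfx
  rw [dist_zero_right, Real.norm_eq_abs]
  calc |f n| = |(f n + σ n * x) - σ n * x| := by ring_nf
    _ ≤ |f n + σ n * x| + |σ n| * |x| := by rw [← abs_mul]; exact abs_sub _ _
    _ ≤ |f n + σ n * x| + |σ n| * M := by gcongr; exact hM x hx
    _ < ε := by linarith

end Affine

lemma tendsto_add_mul_of_nontrivial_support {f σ : ℕ → ℝ} {μ : Measure ℝ}
    (hμ : μ.support.Nontrivial)
    (hkey : ∀ B, MeasurableSet B → μ B ≠ 0 →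
      ∀ U ∈ 𝓝 (0 : ℝ), ∀ᶠ n in atTop, ∃ x ∈ B, f n + σ n * x ∈ U) (z : ℝ) :
    Tendsto (fun n => f n + σ n * z) atTop (𝓝 0) := by
  obtain ⟨x, hx, y, hy, hxy⟩ := hμ
  obtain ⟨r, hr, hxyr⟩ : ∃ r, 0 < r ∧ dist x y = 3 * r :=
    ⟨dist x y / 3, div_pos (dist_pos.2 hxy) three_pos, by ring⟩
  have hball : ∀ w ∈ μ.support,
      ∀ U ∈ 𝓝 (0 : ℝ), ∀ᶠ n in atTop, ∃ x ∈ ball w r, f n + σ n * x ∈ U := fun w hw =>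
    hkey _ measurableSet_ball ((Measure.mem_support_iff_forall w).1 hw _ (ball_mem_nhds w hr)).ne'
  have hsep : ∀ a ∈ ball x r, ∀ b ∈ ball y r, r ≤ dist a b := fun a ha b hb => by
    rw [mem_ball'] at ha
    rw [mem_ball] at hb
    linarith [dist_triangle4 x a b y]
  have hσ := tendsto_zero_of_separated hr hsep (hball x hx) (hball y hy)
  have hf := tendsto_zero_of_isBounded isBounded_ball hσ (hball x hx)
  simpa using hf.add (hσ.mul_const z)

/-- If `(ξ(n))_{n ≥ 1}` is an i.i.d. sequence of real random variables, each equal in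
distribution to a random variable `ξ` on the same probability space, and
`f(n) + σ(n) ξ(n+1) → 0` almost surely as `n → ∞`, then `f(n) + σ(n) ξ → 0` almost surely
as `n → ∞`.  (Here `η n` plays the role of `ξ(n+1)`.) -/
theorem tendsto_of_tendsto_iid {Ω : Type*} [MeasurableSpace Ω] (P : Measure Ω)
    [IsProbabilityMeasure P] (f σ : ℕ → ℝ) (ξ : Ω → ℝ) (hξmeas : Measurable ξ)
    (η : ℕ → Ω → ℝ) (hηmeas : ∀ n, Measurable (η n))
    (hindep : iIndepFun η P)
    (hident : ∀ n, Measure.map (η n) P = Measure.map ξ P)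
    (htends : ∀ᵐ ω ∂P, Tendsto (fun n => f n + σ n * η n ω) atTop (nhds 0)) :
    ∀ᵐ ω ∂P, Tendsto (fun n => f n + σ n * ξ ω) atTop (nhds 0) := by
  set μ := P.map ξ
  have : IsProbabilityMeasure μ := Measure.isProbabilityMeasure_map hξmeas.aemeasurable
  have hkey : ∀ B, MeasurableSet B → μ B ≠ 0 →
      ∀ U ∈ 𝓝 (0 : ℝ), ∀ᶠ n in atTop, ∃ x ∈ B, f n + σ n * x ∈ U := fun B hB hμB _ hU =>
    eventually_exists_mem_of_ae_tendsto (g := fun n x => f n + σ n * x) hηmeas hindep hident hB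
      hμB htends hU
  rcases μ.support.subsingleton_or_nontrivial with hsub | hnt
  · obtain ⟨c, hc⟩ := Measure.nonempty_support (IsProbabilityMeasure.ne_zero μ)
    have hμc : ∀ᵐ x ∂μ, x ∈ ({c} : Set ℝ) := hsub.eq_singleton_of_mem hc ▸ Measure.support_mem_ae
    have hμc_ne : μ {c} ≠ 0 := by
      rw [(mem_ae_iff_prob_eq_one (measurableSet_singleton c)).1 hμc]
      exact one_ne_zero
    have hc_tendsto : Tendsto (fun n => f n + σ n * c) atTop (𝓝 0) := fun U hU => by
      simpa using hkey {c} (measurableSet_singleton c) hμc_ne U hU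
    filter_upwards [ae_of_ae_map hξmeas.aemeasurable hμc] with ω (hω : ξ ω = c)
    rwa [hω]
  · exact ae_of_all _ (tendsto_add_mul_of_nontrivial_support hnt hkey <| ξ ·)
end

section
/- Let f : [0, ∞) → [0, ∞) be a non-negative continuous function and let β > 0. Then for each p ∈ (0, 1) the following are equivalent: (i) the function t ↦ ∫₀ᵗ e^{−β(t−s)} f(s) ds belongs to L^p([0, ∞); ℝ), i.e. ∫₀^∞ (∫₀ᵗ e^{−β(t−s)} f(s) ds)^p dt < ∞; (ii) the sequence n ↦ ∫ₙ^{n+1} f(s) ds belongs to ℓ^p(ℤ₊; ℝ), i.e. ∑_{n=0}^∞ (∫ₙ^{n+1} f(s) ds)^p < ∞. -/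
open MeasureTheory intervalIntegral

/-!
Write `F t = ∫₀ᵗ e^{-β(t-s)} f(s) ds`, `aₙ = ∫ₙ^{n+1} f`, and split `∫₀^∞ F^p` over the unit
intervals `[n, n+1)`. For `t ∈ [n+1, n+2]` the kernel is at least `e^{-2β}` on `[n, n+1]`, so
`f ≥ 0` gives `F t ≥ e^{-2β} aₙ` and `∑ aₙ^p` is dominated by `∫ F^p`. For `t ∈ [n, n+1]` the
kernel is at most `e^β e^{-β(n-k)}` on `[k, k+1]`, so `F t ≤ e^β ∑_{k ≤ n} e^{-β(n-k)} a_k`;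
as `x ↦ x^p` is subadditive for `p ≤ 1`, `∫ F^p` is dominated by the convolution of `(a_k^p)`
with the summable geometric sequence `(e^{-βp})^j`.
-/

open Set Function Real
open scoped ENNReal

theorem Real.rpow_sum_le_sum_rpow {ι : Type*} (s : Finset ι) {g : ι → ℝ}
    (hg : ∀ i ∈ s, 0 ≤ g i) {p : ℝ} (hp0 : 0 < p) (hp1 : p ≤ 1) :
    (∑ i ∈ s, g i) ^ p ≤ ∑ i ∈ s, g i ^ p :=
  Finset.le_sum_of_subadditive_on_pred (· ^ p) (0 ≤ ·) (zero_rpow hp0.ne').le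
    (fun _ _ hx hy => rpow_add_le_add_rpow hx hy hp0.le hp1) (fun _ _ => add_nonneg) g hg

theorem summable_sum_range_mul_pow {r : ℝ} (hr : |r| < 1) {b : ℕ → ℝ} (hb : Summable b) :
    Summable fun n => ∑ k ∈ Finset.range (n + 1), b k * r ^ (n - k) :=
  (summable_norm_sum_mul_range_of_summable_norm hb.norm
    (by simpa [norm_pow] using summable_geometric_of_lt_one (abs_nonneg r) hr)).of_norm

theorem summable_of_tsum_ofReal_ne_top {α : Type*} {d : α → ℝ} (hd : ∀ n, 0 ≤ d n)
    (h : ∑' n, ENNReal.ofReal (d n) ≠ ∞) : Summable d :=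
  (ENNReal.summable_toReal h).congr fun n => ENNReal.toReal_ofReal (hd n)

theorem lintegral_Ici_zero_eq_tsum_Ico (g : ℝ → ℝ≥0∞) :
    ∫⁻ t in Ici 0, g t = ∑' n : ℕ, ∫⁻ t in Ico (n : ℝ) (n + 1), g t := by
  have hunion : Ici (0 : ℝ) = ⋃ n : ℕ, Ico (n : ℝ) (n + 1) := by
    ext x
    simp only [mem_Ici, mem_iUnion, mem_Ico]
    exact ⟨fun hx => ⟨⌊x⌋₊, Nat.floor_le hx, Nat.lt_floor_add_one x⟩,
      fun ⟨n, hn, _⟩ => n.cast_nonneg.trans hn⟩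
  have hdisj : Pairwise (Disjoint on fun n : ℕ => Ico (n : ℝ) (n + 1)) := by
    simpa using Nat.mono_cast.pairwise_disjoint_on_Ico_succ (β := ℝ)
  rw [hunion, lintegral_iUnion (fun _ => measurableSet_Ico) hdisj]

theorem setLIntegral_Ico_add_one_le {g : ℝ → ℝ≥0∞} {x : ℝ} {c : ℝ≥0∞}
    (h : ∀ t ∈ Ico x (x + 1), g t ≤ c) : ∫⁻ t in Ico x (x + 1), g t ≤ c :=
  (setLIntegral_mono' measurableSet_Ico h).trans_eq (by simp)

theorem le_setLIntegral_Ico_add_one {g : ℝ → ℝ≥0∞} {x : ℝ} {c : ℝ≥0∞}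
    (h : ∀ t ∈ Ico x (x + 1), c ≤ g t) : c ≤ ∫⁻ t in Ico x (x + 1), g t :=
  (setLIntegral_mono' measurableSet_Ico h).trans_eq' (by simp)

theorem ContinuousOn.intervalIntegrable_of_Ici {E : Type*} [NormedAddCommGroup E] {g : ℝ → E}
    {c a b : ℝ} (hg : ContinuousOn g (Ici c)) (ha : c ≤ a) (hb : c ≤ b) :
    IntervalIntegrable g volume a b :=
  (hg.mono fun _ hx => (le_min ha hb).trans hx.1).intervalIntegrable

-- The solution of `x' = -β x + f`, `x 0 = 0`, by variation of constants.
noncomputable def dampedIntegral (β : ℝ) (f : ℝ → ℝ) (t : ℝ) : ℝ :=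
  ∫ s in (0 : ℝ)..t, exp (-β * (t - s)) * f s

section

variable {f : ℝ → ℝ} {β : ℝ}

theorem integral_add_one_nonneg (hf0 : ∀ s ∈ Ici 0, 0 ≤ f s) {x : ℝ} (hx : 0 ≤ x) :
    0 ≤ ∫ s in x..x + 1, f s :=
  integral_nonneg (by linarith) fun s hs => hf0 s (hx.trans hs.1)

theorem continuousOn_damped_integrand (hf : ContinuousOn f (Ici 0)) (t : ℝ) :
    ContinuousOn (fun s => exp (-β * (t - s)) * f s) (Ici 0) :=
  (by fun_prop : Continuous fun s => exp (-β * (t - s))).continuousOn.mul hf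

theorem exp_mul_integral_le_dampedIntegral (hf : ContinuousOn f (Ici 0))
    (hf0 : ∀ s ∈ Ici 0, 0 ≤ f s) (hβ : 0 ≤ β) {x t : ℝ} (hx : 0 ≤ x) (ht : x + 1 ≤ t)
    (ht' : t ≤ x + 2) :
    exp (-(2 * β)) * ∫ s in x..x + 1, f s ≤ dampedIntegral β f t := by
  have hk := continuousOn_damped_integrand (β := β) hf t
  calc exp (-(2 * β)) * ∫ s in x..x + 1, f s
    _ = ∫ s in x..x + 1, exp (-(2 * β)) * f s := (intervalIntegral.integral_const_mul _ _).symm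
    _ ≤ ∫ s in x..x + 1, exp (-β * (t - s)) * f s := by
      refine integral_mono_on (by linarith)
        ((hf.intervalIntegrable_of_Ici hx (by linarith)).const_mul _)
        (hk.intervalIntegrable_of_Ici hx (by linarith)) fun s hs => ?_
      gcongr
      · exact hf0 s (hx.trans hs.1)
      · nlinarith [hs.1, hs.2]
    _ ≤ dampedIntegral β f t := by
      refine integral_mono_interval hx (by linarith) (by linarith) ?_
        (hk.intervalIntegrable_of_Ici le_rfl (by linarith))
      filter_upwards [ae_restrict_mem measurableSet_Ioc] with s hs
      exact mul_nonneg (exp_nonneg _) (hf0 s hs.1.le)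

theorem dampedIntegral_le_sum (hf : ContinuousOn f (Ici 0)) (hf0 : ∀ s ∈ Ici 0, 0 ≤ f s)
    (hβ : 0 ≤ β) {n : ℕ} {t : ℝ} (ht : n ≤ t) (ht' : t ≤ n + 1) :
    dampedIntegral β f t ≤
      exp β * ∑ k ∈ Finset.range (n + 1), (∫ s in (k : ℝ)..k + 1, f s) * exp (-β) ^ (n - k) := by
  have hk := continuousOn_damped_integrand (β := β) hf t
  have hkernel : ∀ k ∈ Finset.range (n + 1), ∀ s ∈ Icc (k : ℝ) (k + 1),
      exp (-β * (t - s)) ≤ exp β * exp (-β) ^ (n - k) := by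
    intro k hkn s hs
    rw [← exp_nat_mul, ← exp_add, Nat.cast_sub (Finset.mem_range_succ_iff.mp hkn)]
    gcongr
    nlinarith [hs.2]
  calc dampedIntegral β f t
    _ ≤ ∫ s in (0 : ℝ)..((n + 1 : ℕ) : ℝ), exp (-β * (t - s)) * f s := by
      refine integral_mono_interval le_rfl (n.cast_nonneg.trans ht) (by push_cast; linarith) ?_
        (hk.intervalIntegrable_of_Ici le_rfl (by positivity))
      filter_upwards [ae_restrict_mem measurableSet_Ioc] with s hs
      exact mul_nonneg (exp_nonneg _) (hf0 s hs.1.le)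
    _ = ∑ k ∈ Finset.range (n + 1),
          ∫ s in (k : ℝ)..((k + 1 : ℕ) : ℝ), exp (-β * (t - s)) * f s := by
      rw [sum_integral_adjacent_intervals fun k _ =>
        hk.intervalIntegrable_of_Ici k.cast_nonneg (by positivity)]
      simp
    _ ≤ ∑ k ∈ Finset.range (n + 1),
          ∫ s in (k : ℝ)..k + 1, exp β * exp (-β) ^ (n - k) * f s := by
      gcongr with k hkn
      push_cast
      refine integral_mono_on (by linarith)
        (hk.intervalIntegrable_of_Ici k.cast_nonneg (by positivity))
        ((hf.intervalIntegrable_of_Ici k.cast_nonneg (by positivity)).const_mul _) fun s hs => ?_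
      exact mul_le_mul_of_nonneg_right (hkernel k hkn s hs) (hf0 s (k.cast_nonneg.trans hs.1))
    _ = _ := by
      simp only [intervalIntegral.integral_const_mul, Finset.mul_sum]
      ring_nf

theorem rpow_dampedIntegral_le_sum (hf : ContinuousOn f (Ici 0)) (hf0 : ∀ s ∈ Ici 0, 0 ≤ f s)
    (hβ : 0 ≤ β) {p : ℝ} (hp0 : 0 < p) (hp1 : p ≤ 1) {n : ℕ} {t : ℝ} (ht : n ≤ t)
    (ht' : t ≤ n + 1) :
    dampedIntegral β f t ^ p ≤ exp β ^ p * ∑ k ∈ Finset.range (n + 1),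
      (∫ s in (k : ℝ)..k + 1, f s) ^ p * (exp (-β) ^ p) ^ (n - k) := by
  have ha (k : ℕ) := integral_add_one_nonneg hf0 k.cast_nonneg
  have hterm : ∀ k ∈ Finset.range (n + 1),
      0 ≤ (∫ s in (k : ℝ)..k + 1, f s) * exp (-β) ^ (n - k) :=
    fun k _ => mul_nonneg (ha k) (by positivity)
  have hF : 0 ≤ dampedIntegral β f t :=
    integral_nonneg (n.cast_nonneg.trans ht) fun s hs => mul_nonneg (exp_nonneg _) (hf0 s hs.1)
  calc dampedIntegral β f t ^ p
    _ ≤ (exp β * ∑ k ∈ Finset.range (n + 1),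
          (∫ s in (k : ℝ)..k + 1, f s) * exp (-β) ^ (n - k)) ^ p :=
      rpow_le_rpow hF (dampedIntegral_le_sum hf hf0 hβ ht ht') hp0.le
    _ ≤ exp β ^ p * ∑ k ∈ Finset.range (n + 1),
          ((∫ s in (k : ℝ)..k + 1, f s) * exp (-β) ^ (n - k)) ^ p := by
      rw [mul_rpow (exp_nonneg _) (Finset.sum_nonneg hterm)]
      gcongr
      exact rpow_sum_le_sum_rpow _ hterm hp0 hp1
    _ = _ := by
      congr 1
      refine Finset.sum_congr rfl fun k _ => ?_
      rw [mul_rpow (ha k) (by positivity), rpow_pow_comm (exp_nonneg _)]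

theorem summable_rpow_integral_of_lintegral_lt_top (hf : ContinuousOn f (Ici 0))
    (hf0 : ∀ s ∈ Ici 0, 0 ≤ f s) (hβ : 0 ≤ β) {p : ℝ} (hp0 : 0 < p)
    (h : ∫⁻ t in Ici 0, ENNReal.ofReal (dampedIntegral β f t ^ p) < ∞) :
    Summable fun n : ℕ => (∫ s in (n : ℝ)..n + 1, f s) ^ p := by
  have ha (n : ℕ) := integral_add_one_nonneg hf0 n.cast_nonneg
  rw [← summable_mul_left_iff (rpow_pos_of_pos (exp_pos (-(2 * β))) p).ne']
  refine summable_of_tsum_ofReal_ne_top (fun n => by have := ha n; positivity)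
    (ne_top_of_le_ne_top h.ne ?_)
  rw [lintegral_Ici_zero_eq_tsum_Ico]
  refine (ENNReal.tsum_le_tsum fun n => le_setLIntegral_Ico_add_one fun t ht => ?_).trans
    (ENNReal.tsum_comp_le_tsum_of_injective (add_left_injective 1) _)
  push_cast at ht
  rw [← mul_rpow (exp_nonneg _) (ha n)]
  exact ENNReal.ofReal_le_ofReal <| rpow_le_rpow (mul_nonneg (exp_nonneg _) (ha n))
    (exp_mul_integral_le_dampedIntegral hf hf0 hβ n.cast_nonneg ht.1 (by linarith [ht.2])) hp0.le

theorem lintegral_lt_top_of_summable_rpow_integral (hf : ContinuousOn f (Ici 0))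
    (hf0 : ∀ s ∈ Ici 0, 0 ≤ f s) (hβ : 0 < β) {p : ℝ} (hp0 : 0 < p) (hp1 : p ≤ 1)
    (h : Summable fun n : ℕ => (∫ s in (n : ℝ)..n + 1, f s) ^ p) :
    ∫⁻ t in Ici 0, ENNReal.ofReal (dampedIntegral β f t ^ p) < ∞ := by
  have hr : |exp (-β) ^ p| < 1 := by
    rw [abs_of_nonneg (by positivity)]
    exact rpow_lt_one (exp_nonneg _) (exp_lt_one_iff.mpr (by linarith)) hp0
  rw [lintegral_Ici_zero_eq_tsum_Ico]
  refine lt_of_le_of_lt (ENNReal.tsum_le_tsum fun n => setLIntegral_Ico_add_one_le fun t ht =>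
    ENNReal.ofReal_le_ofReal (rpow_dampedIntegral_le_sum hf hf0 hβ.le hp0 hp1 ht.1 ht.2.le))
    ((summable_sum_range_mul_pow hr h).mul_left _).tsum_ofReal_lt_top

end

/-- For a non-negative continuous `f : [0,∞) → [0,∞)`, `β > 0` and `p ∈ (0,1)`:
`t ↦ ∫₀ᵗ e^{−β(t−s)} f(s) ds ∈ L^p([0,∞))` iff `n ↦ ∫ₙ^{n+1} f(s) ds ∈ ℓ^p(ℤ₊)`. -/
theorem perturbed_ode_Lp_iff_lp (f : ℝ → ℝ) (hcont : ContinuousOn f (Set.Ici 0))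
    (hnonneg : ∀ t ∈ Set.Ici (0 : ℝ), 0 ≤ f t) (β : ℝ) (hβ : 0 < β)
    (p : ℝ) (hp : p ∈ Set.Ioo (0 : ℝ) 1) :
    (∫⁻ t in Set.Ici (0 : ℝ),
        ENNReal.ofReal ((∫ s in (0 : ℝ)..t, Real.exp (-β * (t - s)) * f s) ^ p)) < ⊤
      ↔ Summable fun n : ℕ => (∫ s in (n : ℝ)..((n : ℝ) + 1), f s) ^ p :=
  ⟨summable_rpow_integral_of_lintegral_lt_top hcont hnonneg hβ.le hp.1,
    lintegral_lt_top_of_summable_rpow_integral hcont hnonneg hβ hp.1 hp.2.le⟩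
end

section
/- Let f : [0, ∞) → [0, ∞) be locally integrable, let p ∈ [1, ∞), and assume that for every θ > 0, ∫₀^∞ (∫ₜ^{t+θ} f(s) ds)^p dt < ∞. Then for every sequence (aₙ)_{n≥0} with a₀ = 0 and 0 < α ≤ a_{n+1} − aₙ ≤ β for all n (for some constants α, β > 0), one has ∑_{n=0}^∞ (∫_{aₙ}^{a_{n+1}} f(s) ds)^p < ∞. -/
/-!
Each step integral `∫_{aₙ₊₁}^{aₙ₊₂} f` is dominated by the window integral `∫ₜ^{t+2β} f` for
every `t ∈ [aₙ, aₙ₊₁)`, because `[aₙ₊₁, aₙ₊₂] ⊆ [t, t + 2β]` and `f ≥ 0`. Averaging over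
`t ∈ [aₙ, aₙ₊₁)`, an interval of length at least `α`, gives
`α · (∫_{aₙ₊₁}^{aₙ₊₂} f)^p ≤ ∫_{[aₙ, aₙ₊₁)} (∫ₜ^{t+2β} f)^p dt`, and these intervals are disjoint
subsets of `[0, ∞)`, so the series is bounded by `α⁻¹ ∫₀^∞ (∫ₜ^{t+2β} f)^p dt < ∞`.
-/

open MeasureTheory intervalIntegral Set
open scoped ENNReal

theorem intervalIntegral_mono_interval_of_locallyIntegrableOn {f : ℝ → ℝ} {s : Set ℝ}
    (hf : LocallyIntegrableOn f s) (hf₀ : ∀ x ∈ s, 0 ≤ f x) {a b c d : ℝ}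
    (hcd : Icc c d ⊆ s) (hca : c ≤ a) (hab : a ≤ b) (hbd : b ≤ d) :
    ∫ x in a..b, f x ≤ ∫ x in c..d, f x := by
  have hcd' : c ≤ d := hca.trans (hab.trans hbd)
  refine integral_mono_interval hca hab hbd ?_ ?_
  · filter_upwards [ae_restrict_mem measurableSet_Ioc] with x hx
    exact hf₀ x (hcd (Ioc_subset_Icc_self hx))
  · exact (intervalIntegrable_iff_integrableOn_Icc_of_le hcd').mpr
      (hf.integrableOn_compact_subset hcd isCompact_Icc)

theorem tsum_mul_measure_le_setLIntegral {X ι : Type*} [MeasurableSpace X] [Countable ι]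
    {μ : Measure X} {S : ι → Set X} {s : Set X} (hS : ∀ i, MeasurableSet (S i))
    (hdisj : Pairwise (Function.onFun Disjoint S)) (hsub : ∀ i, S i ⊆ s)
    {c : ι → ℝ≥0∞} {g : X → ℝ≥0∞} (hcg : ∀ i, ∀ x ∈ S i, c i ≤ g x) :
    ∑' i, c i * μ (S i) ≤ ∫⁻ x in s, g x ∂μ :=
  calc ∑' i, c i * μ (S i)
      = ∑' i, ∫⁻ _ in S i, c i ∂μ := by simp only [setLIntegral_const]
    _ ≤ ∑' i, ∫⁻ x in S i, g x ∂μ :=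
        ENNReal.tsum_le_tsum fun i => setLIntegral_mono' (hS i) (hcg i)
    _ = ∫⁻ x in ⋃ i, S i, g x ∂μ := (lintegral_iUnion hS hdisj g).symm
    _ ≤ ∫⁻ x in s, g x ∂μ := lintegral_mono_set (iUnion_subset hsub)

theorem summable_of_tsum_ofReal_mul_lt_top {ι : Type*} {u : ι → ℝ} (hu : ∀ i, 0 ≤ u i)
    {c : ℝ≥0∞} (hc : c ≠ 0) (h : ∑' i, ENNReal.ofReal (u i) * c < ∞) : Summable u := by
  rw [ENNReal.tsum_mul_right] at h
  have hfin : ∑' i, ENNReal.ofReal (u i) ≠ ∞ := (ENNReal.lt_top_of_mul_ne_top_left h.ne hc).ne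
  simpa only [ENNReal.toReal_ofReal (hu _)] using ENNReal.summable_toReal hfin

/-- If `f : [0,∞) → [0,∞)` is locally integrable, `p ∈ [1,∞)`, and for every `θ > 0`
`∫₀^∞ (∫ₜ^{t+θ} f(s) ds)^p dt < ∞`, then for every sequence `(aₙ)` with `a₀ = 0` and
`0 < α ≤ a_{n+1} − aₙ ≤ β`, one has `∑ₙ (∫_{aₙ}^{a_{n+1}} f(s) ds)^p < ∞`. -/
theorem summable_of_integral_average_Lp (f : ℝ → ℝ)
    (hloc : LocallyIntegrableOn f (Set.Ici 0))
    (hnonneg : ∀ t ∈ Set.Ici (0 : ℝ), 0 ≤ f t) (p : ℝ) (hp : 1 ≤ p)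
    (hint : ∀ θ > (0 : ℝ),
      (∫⁻ t in Set.Ici (0 : ℝ), ENNReal.ofReal ((∫ s in t..(t + θ), f s) ^ p)) < ⊤)
    (a : ℕ → ℝ) (α β : ℝ) (hα : 0 < α) (hβ : 0 < β) (ha0 : a 0 = 0)
    (hstep : ∀ n, α ≤ a (n + 1) - a n ∧ a (n + 1) - a n ≤ β) :
    Summable fun n => (∫ s in (a n)..(a (n + 1)), f s) ^ p := by
  have hmono : Monotone a := monotone_nat_of_le_succ fun n => by linarith [(hstep n).1]
  have ha₀ : ∀ n, 0 ≤ a n := fun n => ha0 ▸ hmono n.zero_le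
  have hI₀ : ∀ n, 0 ≤ ∫ s in (a n)..(a (n + 1)), f s := fun n =>
    integral_nonneg (hmono n.le_succ) fun u hu => hnonneg u ((ha₀ n).trans hu.1)
  have hwindow : ∀ n, ∀ t ∈ Ico (a n) (a (n + 1)),
      ENNReal.ofReal ((∫ s in (a (n + 1))..(a (n + 2)), f s) ^ p)
        ≤ ENNReal.ofReal ((∫ s in t..(t + 2 * β), f s) ^ p) := by
    rintro n t ⟨hat, hta⟩
    have hle : ∫ s in (a (n + 1))..(a (n + 2)), f s ≤ ∫ s in t..(t + 2 * β), f s :=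
      intervalIntegral_mono_interval_of_locallyIntegrableOn hloc hnonneg
        (fun x hx => (ha₀ n).trans (hat.trans hx.1)) hta.le (hmono (by omega))
        (by linarith [(hstep n).2, (hstep (n + 1)).2])
    exact ENNReal.ofReal_le_ofReal (Real.rpow_le_rpow (hI₀ _) hle (by linarith))
  have hdisj : Pairwise (Function.onFun Disjoint fun n => Ico (a n) (a (n + 1))) := by
    simpa only [Order.succ_eq_add_one] using hmono.pairwise_disjoint_on_Ico_succ
  have hbound := tsum_mul_measure_le_setLIntegral (μ := volume) (s := Ici 0)
    (fun n => measurableSet_Ico) hdisj (fun n _ hx => (ha₀ n).trans hx.1) hwindow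
  have hvol : ∀ n, ENNReal.ofReal α ≤ volume (Ico (a n) (a (n + 1))) := fun n => by
    rw [Real.volume_Ico]
    exact ENNReal.ofReal_le_ofReal (hstep n).1
  have hsum : ∑' n, ENNReal.ofReal ((∫ s in (a (n + 1))..(a (n + 2)), f s) ^ p)
      * ENNReal.ofReal α < ∞ :=
    ((ENNReal.tsum_le_tsum fun n => by gcongr; exact hvol n).trans hbound).trans_lt
      (hint (2 * β) (by positivity))
  exact (summable_nat_add_iff 1).mp <| summable_of_tsum_ofReal_mul_lt_top
    (fun n => Real.rpow_nonneg (hI₀ (n + 1)) p) (by simpa using hα) hsum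
end

section
/- Let f : [0, ∞) → [0, ∞) be locally integrable and let q ∈ (0, ∞). Then the function t ↦ ∫ₜ^{t+1} f(s) ds belongs to L^q([0, ∞); ℝ) (i.e. ∫₀^∞ (∫ₜ^{t+1} f(s) ds)^q dt < ∞) if and only if for every θ > 0 the function t ↦ ∫ₜ^{t+θ} f(s) ds belongs to L^q([0, ∞); ℝ). -/
/-!
Cutting a window of length `θ₁ + θ₂` into windows of lengths `θ₁` and `θ₂`, the bound
`(a + b) ^ q ≤ 2 ^ q (a ^ q + b ^ q)` and translation invariance of Lebesgue measure show that
finiteness of `∫₀^∞ (∫ₜ^{t+θ} f) ^ q dt` passes from `θ₁` and `θ₂` to `θ₁ + θ₂`, hence from `θ = 1`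
to every `θ = n`, and then to every `θ` since window integrals grow with `θ`. As `f ≥ 0`, the
window integrals can be taken as lower Lebesgue integrals of `ofReal ∘ f`.
-/

open MeasureTheory intervalIntegral Set
open scoped ENNReal

noncomputable def windowLIntegral (g : ℝ → ℝ≥0∞) (θ t : ℝ) : ℝ≥0∞ :=
  ∫⁻ s in Ioc t (t + θ), g s

section windowLIntegral

variable {g : ℝ → ℝ≥0∞} {q : ℝ}

theorem measurable_windowLIntegral (hg : Measurable g) (θ : ℝ) :
    Measurable (windowLIntegral g θ) := by
  have hs : MeasurableSet {p : ℝ × ℝ | p.2 ∈ Ioc p.1 (p.1 + θ)} :=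
    (measurableSet_lt measurable_fst measurable_snd).inter
      (measurableSet_le measurable_snd (measurable_fst.add_const θ))
  convert ((hg.comp measurable_snd).indicator hs).lintegral_prod_right' (ν := volume)
    using 2 with t
  rw [windowLIntegral, ← lintegral_indicator measurableSet_Ioc]
  rfl

theorem aemeasurable_windowLIntegral (hg : AEMeasurable g (volume.restrict (Ici 0))) (θ : ℝ) :
    AEMeasurable (windowLIntegral g θ) (volume.restrict (Ici 0)) := by
  refine ⟨windowLIntegral (hg.mk g) θ, measurable_windowLIntegral hg.measurable_mk θ, ?_⟩
  filter_upwards [self_mem_ae_restrict measurableSet_Ici] with t (ht : 0 ≤ t)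
  refine lintegral_congr_ae (ae_restrict_of_ae_restrict_of_subset ?_ hg.ae_eq_mk)
  exact fun s hs => ht.trans hs.1.le

theorem windowLIntegral_mono_length {θ θ' : ℝ} (h : θ ≤ θ') (t : ℝ) :
    windowLIntegral g θ t ≤ windowLIntegral g θ' t :=
  lintegral_mono_set (Ioc_subset_Ioc_right (by linarith))

theorem windowLIntegral_add_le (θ₁ θ₂ t : ℝ) :
    windowLIntegral g (θ₁ + θ₂) t ≤ windowLIntegral g θ₁ t + windowLIntegral g θ₂ (t + θ₁) := by
  have hcover : Ioc t (t + (θ₁ + θ₂)) ⊆ Ioc t (t + θ₁) ∪ Ioc (t + θ₁) (t + θ₁ + θ₂) := by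
    intro s hs
    rcases le_or_gt s (t + θ₁) with h | h
    · exact Or.inl ⟨hs.1, h⟩
    · exact Or.inr ⟨h, by linarith [hs.2]⟩
  exact (lintegral_mono_set hcover).trans (lintegral_union_le _ _ _)

theorem setLIntegral_Ici_comp_add_le (h : ℝ → ℝ≥0∞) {c : ℝ} (hc : 0 ≤ c) :
    ∫⁻ t in Ici 0, h (t + c) ≤ ∫⁻ t in Ici 0, h t := by
  rw [(measurePreserving_add_right volume c).setLIntegral_comp_emb
    (measurableEmbedding_addRight c), image_add_const_Ici, zero_add]
  exact lintegral_mono_set (Ici_subset_Ici.2 hc)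

theorem lintegral_rpow_windowLIntegral_add_lt_top
    (hg : AEMeasurable g (volume.restrict (Ici 0))) (hq : 0 ≤ q) {θ₁ θ₂ : ℝ} (hθ₁ : 0 ≤ θ₁)
    (h₁ : ∫⁻ t in Ici 0, windowLIntegral g θ₁ t ^ q < ∞)
    (h₂ : ∫⁻ t in Ici 0, windowLIntegral g θ₂ t ^ q < ∞) :
    ∫⁻ t in Ici 0, windowLIntegral g (θ₁ + θ₂) t ^ q < ∞ := by
  have h2q : (2 : ℝ≥0∞) ^ q ≠ ∞ := ENNReal.rpow_ne_top_of_nonneg hq (by norm_num)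
  calc ∫⁻ t in Ici 0, windowLIntegral g (θ₁ + θ₂) t ^ q
      ≤ ∫⁻ t in Ici 0, 2 ^ q *
          (windowLIntegral g θ₁ t ^ q + windowLIntegral g θ₂ (t + θ₁) ^ q) :=
        lintegral_mono fun t => (ENNReal.rpow_le_rpow (windowLIntegral_add_le θ₁ θ₂ t) hq).trans
          (ENNReal.add_rpow_le_two_rpow_mul_rpow_add_rpow _ _ hq)
    _ = 2 ^ q * ((∫⁻ t in Ici 0, windowLIntegral g θ₁ t ^ q)
          + ∫⁻ t in Ici 0, windowLIntegral g θ₂ (t + θ₁) ^ q) := by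
        rw [lintegral_const_mul' _ _ h2q,
          lintegral_add_left' ((aemeasurable_windowLIntegral hg θ₁).pow_const q)]
    _ < ∞ := ENNReal.mul_lt_top h2q.lt_top (ENNReal.add_lt_top.2
        ⟨h₁, (setLIntegral_Ici_comp_add_le _ hθ₁).trans_lt h₂⟩)

theorem lintegral_rpow_windowLIntegral_lt_top
    (hg : AEMeasurable g (volume.restrict (Ici 0))) (hq : 0 ≤ q) {a : ℝ} (ha : 0 < a)
    (h : ∫⁻ t in Ici 0, windowLIntegral g a t ^ q < ∞) (θ : ℝ) :
    ∫⁻ t in Ici 0, windowLIntegral g θ t ^ q < ∞ := by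
  have hmul : ∀ n : ℕ, ∫⁻ t in Ici 0, windowLIntegral g ((n + 1) * a) t ^ q < ∞ := by
    intro n
    induction n with
    | zero => simpa using h
    | succ n ih =>
      rw [Nat.cast_succ, add_one_mul]
      exact lintegral_rpow_windowLIntegral_add_lt_top hg hq (by positivity) ih h
  obtain ⟨n, hn⟩ := Archimedean.arch θ ha
  refine lt_of_le_of_lt (lintegral_mono fun t => ?_) (hmul n)
  refine ENNReal.rpow_le_rpow (windowLIntegral_mono_length ?_ t) hq
  rw [nsmul_eq_mul] at hn
  linarith

end windowLIntegral

theorem ofReal_intervalIntegral_rpow_eq_windowLIntegral {f : ℝ → ℝ}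
    (hloc : LocallyIntegrableOn f (Ici 0)) (hnonneg : ∀ t ∈ Ici (0 : ℝ), 0 ≤ f t)
    {q : ℝ} (hq : 0 ≤ q) {θ t : ℝ} (hθ : 0 ≤ θ) (ht : 0 ≤ t) :
    ENNReal.ofReal ((∫ s in t..(t + θ), f s) ^ q)
      = windowLIntegral (fun s => ENNReal.ofReal (f s)) θ t ^ q := by
  have hsub : Icc t (t + θ) ⊆ Ici 0 := fun s hs => ht.trans hs.1
  have hint : IntegrableOn f (Ioc t (t + θ)) :=
    (hloc.integrableOn_compact_subset hsub isCompact_Icc).mono_set Ioc_subset_Icc_self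
  have hf : 0 ≤ᵐ[volume.restrict (Ioc t (t + θ))] f :=
    (ae_restrict_iff' measurableSet_Ioc).2 (ae_of_all _ fun s hs =>
      hnonneg s (hsub (Ioc_subset_Icc_self hs)))
  rw [integral_of_le (by linarith), ← ENNReal.ofReal_rpow_of_nonneg (integral_nonneg_of_ae hf) hq,
    ofReal_integral_eq_lintegral_ofReal hint hf, windowLIntegral]

/-- For a locally integrable non-negative `f : [0,∞) → [0,∞)` and `q ∈ (0,∞)`:
`t ↦ ∫ₜ^{t+1} f(s) ds ∈ L^q([0,∞))` iff for every `θ > 0` the function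
`t ↦ ∫ₜ^{t+θ} f(s) ds` belongs to `L^q([0,∞))`. -/
theorem integral_average_Lq_iff (f : ℝ → ℝ)
    (hloc : LocallyIntegrableOn f (Set.Ici 0))
    (hnonneg : ∀ t ∈ Set.Ici (0 : ℝ), 0 ≤ f t) (q : ℝ) (hq : 0 < q) :
    (∫⁻ t in Set.Ici (0 : ℝ), ENNReal.ofReal ((∫ s in t..(t + 1), f s) ^ q)) < ⊤
      ↔ ∀ θ > (0 : ℝ),
        (∫⁻ t in Set.Ici (0 : ℝ), ENNReal.ofReal ((∫ s in t..(t + θ), f s) ^ q)) < ⊤ := by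
  set g : ℝ → ℝ≥0∞ := fun s => ENNReal.ofReal (f s)
  have hg : AEMeasurable g (volume.restrict (Ici 0)) :=
    hloc.aestronglyMeasurable.aemeasurable.ennreal_ofReal
  have hconv : ∀ θ : ℝ, 0 ≤ θ →
      ∫⁻ t in Ici 0, ENNReal.ofReal ((∫ s in t..(t + θ), f s) ^ q)
        = ∫⁻ t in Ici 0, windowLIntegral g θ t ^ q :=
    fun θ hθ => setLIntegral_congr_fun measurableSet_Ici fun t ht =>
      ofReal_intervalIntegral_rpow_eq_windowLIntegral hloc hnonneg hq.le hθ ht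
  refine ⟨fun h θ hθ => ?_, fun h => h 1 one_pos⟩
  rw [hconv θ hθ.le]
  rw [hconv 1 zero_le_one] at h
  exact lintegral_rpow_windowLIntegral_lt_top hg hq.le one_pos h θ
end

section
/- Fix β > 0 and define g : [0, ∞) → [0, ∞) as follows: g(t) = 0 for t ∈ [0, 2]; for each integer n ≥ 2, with hₙ := n^β and aₙ := 1/2 − 1/n^{β+1}, set g(t) = 0 for t ∈ [n, n + aₙ], g(t) = (hₙ/(1/2 − aₙ)) t − hₙ(n + aₙ)/(1/2 − aₙ) for t ∈ [n + aₙ, n + 1/2], g(t) = (−hₙ/(1/2 − aₙ)) t + hₙ(n + 1 − aₙ)/(1/2 − aₙ) for t ∈ [n + 1/2, n + 1 − aₙ], and g(t) = 0 for t ∈ [n + 1 − aₙ, n + 1]. Then g is continuous and non-negative, and for every p ∈ (1, ∞): ∫₀^∞ (∫ₜ^{t+1} g(s) ds)^p dt < ∞, while ∫₀^∞ g(s)^p ds = +∞. -/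
/-!
On `[n, n + 1]` the function `g` is a tent of height `n ^ β` and half-width `n ^ -(β + 1)`,
so its mass there is `1 / n`. A window `[t, t + 1]` meets at most two such tents, hence
`∫ₜ^{t+1} g ≲ 1 / (t + 1)`, which is `p`-integrable for `p > 1`. On the other hand `g ≥ n ^ β / 2`
on a set of measure `n ^ -(β + 1)` in `[n, n + 1]`, so the `p`-th power of `g` has mass at least
`2 ^ -p n ^ (β (p - 1) - 1) ≥ 2 ^ -p / n` there, and the harmonic series diverges.
-/

open MeasureTheory intervalIntegral

/-- The continuous piecewise-linear "spike" function: `g = 0` on `[0,2]`, and for each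
integer `n ≥ 2`, with `hₙ = n^β` and `aₙ = 1/2 − 1/n^{β+1}`, `g` vanishes on
`[n, n+aₙ]` and `[n+1−aₙ, n+1]` and is linear on `[n+aₙ, n+1/2]` and `[n+1/2, n+1−aₙ]`,
rising to the maximal height `hₙ` at `n + 1/2`. -/
noncomputable def spike (β : ℝ) (t : ℝ) : ℝ :=
  if t ≤ 2 then 0
  else
    let n : ℕ := ⌊t⌋₊
    let hn : ℝ := (n : ℝ) ^ β
    let an : ℝ := 1 / 2 - 1 / (n : ℝ) ^ (β + 1)
    if t ≤ (n : ℝ) + an then 0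
    else if t ≤ (n : ℝ) + 1 / 2 then
      hn / (1 / 2 - an) * t - hn * ((n : ℝ) + an) / (1 / 2 - an)
    else if t ≤ (n : ℝ) + 1 - an then
      -hn / (1 / 2 - an) * t + hn * ((n : ℝ) + 1 - an) / (1 / 2 - an)
    else 0

open Set

noncomputable def tent (c w h t : ℝ) : ℝ := h / w * max 0 (w - |t - c|)

section Tent

variable {c w h : ℝ}

theorem continuous_tent : Continuous (tent c w h) := by
  unfold tent; fun_prop

theorem tent_nonneg (hw : 0 ≤ w) (hh : 0 ≤ h) (t : ℝ) : 0 ≤ tent c w h t := by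
  unfold tent; positivity

theorem tent_eq_zero {t : ℝ} (ht : w ≤ |t - c|) : tent c w h t = 0 := by
  simp [tent, max_eq_left (sub_nonpos.2 ht)]

theorem tent_eq_zero_of_notMem_Icc {t : ℝ} (ht : t ∉ Icc (c - w) (c + w)) :
    tent c w h t = 0 := by
  rw [mem_Icc, not_and_or, not_le, not_le] at ht
  exact tent_eq_zero (le_abs'.2 (ht.imp (fun _ => by linarith) (fun _ => by linarith)))

theorem tent_le (hh : 0 ≤ h) (t : ℝ) : tent c w h t ≤ h := by
  rcases le_or_gt w 0 with hw | hw
  · rw [tent_eq_zero (hw.trans (abs_nonneg _))]; exact hh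
  calc tent c w h t ≤ h / w * w := by
        unfold tent; gcongr; exact max_le hw.le (by linarith [abs_nonneg (t - c)])
    _ = h := div_mul_cancel₀ h hw.ne'

theorem half_le_tent (hw : 0 < w) (hh : 0 ≤ h) {t : ℝ} (ht : |t - c| ≤ w / 2) :
    h / 2 ≤ tent c w h t :=
  calc h / 2 = h / w * (w / 2) := by field_simp
    _ ≤ tent c w h t := by unfold tent; gcongr; exact le_max_of_le_right (by linarith)

theorem integral_tent_le (hw : 0 ≤ w) (hh : 0 ≤ h) {a b : ℝ} (hab : a ≤ b) :
    ∫ t in a..b, tent c w h t ≤ 2 * w * h := by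
  have hsupp : (Icc (c - w) (c + w)).indicator (tent c w h) = tent c w h :=
    indicator_eq_self.2 (Function.support_subset_iff'.2 fun _ => tent_eq_zero_of_notMem_Icc)
  set s := Ioc a b ∩ Icc (c - w) (c + w)
  have hs : volume s < ⊤ := (measure_mono inter_subset_right).trans_lt measure_Icc_lt_top
  have hvol : volume.real s ≤ 2 * w := by
    grw [measureReal_mono inter_subset_right measure_Icc_lt_top.ne, Real.volume_real_Icc]
    rw [max_eq_left (by linarith)]; ring_nf; rfl
  calc ∫ t in a..b, tent c w h t
      = ∫ t in s, tent c w h t := by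
        rw [integral_of_le hab, ← setIntegral_indicator measurableSet_Icc (f := tent c w h),
          hsupp]
    _ ≤ h * volume.real s :=
        (Real.le_norm_self _).trans (norm_setIntegral_le_of_norm_le_const hs fun t _ => by
          rw [Real.norm_of_nonneg (tent_nonneg hw hh t)]; exact tent_le hh t)
    _ ≤ 2 * w * h := by rw [mul_comm]; gcongr

theorem ofReal_le_setLIntegral_rpow_tent (hw : 0 < w) (hh : 0 ≤ h) {p : ℝ} (hp : 0 ≤ p) :
    ENNReal.ofReal ((h / 2) ^ p * w) ≤
      ∫⁻ t in Icc (c - w / 2) (c + w / 2), ENNReal.ofReal (tent c w h t ^ p) :=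
  calc ENNReal.ofReal ((h / 2) ^ p * w)
      = ∫⁻ _ in Icc (c - w / 2) (c + w / 2), ENNReal.ofReal ((h / 2) ^ p) := by
        rw [setLIntegral_const, Real.volume_Icc, ← ENNReal.ofReal_mul (by positivity)]
        ring_nf
    _ ≤ _ := setLIntegral_mono' measurableSet_Icc fun t ht =>
        ENNReal.ofReal_le_ofReal (Real.rpow_le_rpow (by positivity)
          (half_le_tent hw hh (abs_sub_le_iff.2 ⟨by linarith [ht.2], by linarith [ht.1]⟩)) hp)

end Tent

theorem continuous_of_continuousOn_Icc_intCast {X : Type*} [TopologicalSpace X] {f : ℝ → X}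
    (hf : ∀ m : ℤ, ContinuousOn f (Icc (m : ℝ) (m + 1))) : Continuous f := by
  refine continuous_iff_continuousAt.2 fun x => ?_
  have hcont := (hf (⌊x⌋ - 1)).union_of_isClosed (hf ⌊x⌋) isClosed_Icc isClosed_Icc
  push_cast at hcont
  rw [sub_add_cancel, Icc_union_Icc_eq_Icc (by linarith) (by linarith)] at hcont
  exact hcont.continuousAt
    (Icc_mem_nhds (by linarith [Int.floor_le x]) (Int.lt_floor_add_one x))

theorem integral_add_one_le_of_forall_nat {f : ℝ → ℝ} (hf : Continuous f) (hf0 : 0 ≤ f)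
    {C : ℝ} (hC : ∀ m : ℕ, ∫ x in (m : ℝ)..m + 1, f x ≤ C / (m + 1)) {t : ℝ} (ht : 0 ≤ t) :
    ∫ x in t..t + 1, f x ≤ 4 * C / (t + 1) := by
  set n := ⌊t⌋₊
  have hnt : (n : ℝ) ≤ t := Nat.floor_le ht
  have htn : t < n + 1 := Nat.lt_floor_add_one t
  have hC0 : 0 ≤ C := by
    have h0 := hC 0
    rw [Nat.cast_zero, zero_add, div_one] at h0
    exact (integral_nonneg zero_le_one fun x _ => hf0 x).trans h0
  have hnext : ∫ x in (n + 1 : ℝ)..n + 1 + 1, f x ≤ C / (n + 1 + 1) := by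
    exact_mod_cast hC (n + 1)
  calc ∫ x in t..t + 1, f x
      ≤ ∫ x in (n : ℝ)..n + 1 + 1, f x :=
        integral_mono_interval hnt (by linarith) (by linarith)
          (ae_of_all _ fun x => hf0 x) (hf.intervalIntegrable _ _)
    _ = (∫ x in (n : ℝ)..n + 1, f x) + ∫ x in (n + 1 : ℝ)..n + 1 + 1, f x :=
        (integral_add_adjacent_intervals (hf.intervalIntegrable _ _)
          (hf.intervalIntegrable _ _)).symm
    _ ≤ C / (n + 1) + C / (n + 1) := by
        grw [hC n, hnext]; gcongr; linarith
    _ ≤ 4 * C / (t + 1) := by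
        rw [← add_div, div_le_div_iff₀ (by positivity) (by linarith)]
        nlinarith

theorem setLIntegral_Ici_rpow_lt_top_of_le_div {F : ℝ → ℝ} {C p : ℝ} (hp : 1 < p)
    (hF0 : ∀ t, 0 ≤ t → 0 ≤ F t) (hFC : ∀ t, 0 ≤ t → F t ≤ C / (t + 1)) :
    ∫⁻ t in Ici 0, ENNReal.ofReal (F t ^ p) < ⊤ := by
  have hC0 : 0 ≤ C := by simpa using (hF0 0 le_rfl).trans (hFC 0 le_rfl)
  have hint : Integrable fun t : ℝ => C ^ p * (1 + ‖t‖) ^ (-p) :=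
    (integrable_one_add_norm (by simpa using hp)).const_mul _
  calc ∫⁻ t in Ici 0, ENNReal.ofReal (F t ^ p)
      ≤ ∫⁻ t in Ici 0, ENNReal.ofReal (C ^ p * (1 + ‖t‖) ^ (-p)) :=
        setLIntegral_mono' measurableSet_Ici fun t (ht : 0 ≤ t) => by
          refine ENNReal.ofReal_le_ofReal ?_
          rw [Real.norm_of_nonneg ht, Real.rpow_neg (by positivity), ← div_eq_mul_inv,
            ← Real.div_rpow hC0 (by positivity), add_comm 1 t]
          exact Real.rpow_le_rpow (hF0 t ht) (hFC t ht) (by linarith)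
    _ < ⊤ := hint.integrableOn.setLIntegral_lt_top

theorem not_summable_div_nat_add {c : ℝ} (hc : c ≠ 0) (N : ℕ) :
    ¬Summable fun k : ℕ => c / ((k + N : ℕ) : ℝ) := by
  simp_rw [div_eq_mul_one_div c, summable_mul_left_iff hc]
  exact (summable_nat_add_iff (f := fun n : ℕ => 1 / (n : ℝ)) N).not.2
    Real.not_summable_one_div_natCast

theorem setLIntegral_Ici_eq_top_of_forall_nat {f : ℝ → ENNReal} {c : ℝ} (hc : 0 < c) (N : ℕ)
    (hf : ∀ n ≥ N, ENNReal.ofReal (c / n) ≤ ∫⁻ x in Ico (n : ℝ) (n + 1), f x) :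
    ∫⁻ x in Ici 0, f x = ⊤ := by
  have hdisj : Pairwise (Function.onFun Disjoint fun n : ℕ => Ico (n : ℝ) (n + 1)) :=
    fun i j hij => by
      simpa using pairwise_disjoint_Ico_intCast ℝ (Nat.cast_injective.ne hij : (i : ℤ) ≠ j)
  have hsub : ⋃ n : ℕ, Ico (n : ℝ) (n + 1) ⊆ Ici 0 :=
    iUnion_subset fun n x hx => (Nat.cast_nonneg n).trans hx.1
  have hharm : ∑' k : ℕ, ENNReal.ofReal (c / (k + N : ℕ)) = ⊤ := by
    by_contra h
    refine not_summable_div_nat_add hc.ne' N ((ENNReal.summable_toReal h).congr fun k => ?_)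
    exact ENNReal.toReal_ofReal (by positivity)
  refine eq_top_iff.2 ?_
  calc ⊤ = ∑' k : ℕ, ENNReal.ofReal (c / (k + N : ℕ)) := hharm.symm
    _ ≤ ∑' k : ℕ, ∫⁻ x in Ico ((k + N : ℕ) : ℝ) ((k + N : ℕ) + 1), f x :=
        ENNReal.tsum_le_tsum fun k => hf _ (Nat.le_add_left N k)
    _ ≤ ∑' n : ℕ, ∫⁻ x in Ico (n : ℝ) (n + 1), f x :=
        ENNReal.tsum_comp_le_tsum_of_injective (add_left_injective N)
          fun n : ℕ => ∫⁻ x in Ico (n : ℝ) (n + 1), f x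
    _ = ∫⁻ x in ⋃ n : ℕ, Ico (n : ℝ) (n + 1), f x :=
        (lintegral_iUnion (fun _ => measurableSet_Ico) hdisj f).symm
    _ ≤ ∫⁻ x in Ici 0, f x := lintegral_mono_set hsub

/-- The half-width `1 / 2 - aₙ` of the `n`-th spike is `1 / n ^ (β + 1)`. -/
noncomputable def spikeTent (β : ℝ) (n : ℕ) : ℝ → ℝ :=
  tent ((n : ℝ) + 1 / 2) (1 / (n : ℝ) ^ (β + 1)) ((n : ℝ) ^ β)

theorem spike_of_le_two {β t : ℝ} (ht : t ≤ 2) : spike β t = 0 := by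
  simp [spike, ht]

theorem spike_eq_spikeTent_floor (β : ℝ) {t : ℝ} (ht : 2 < t) :
    spike β t = spikeTent β ⌊t⌋₊ t := by
  set n := ⌊t⌋₊
  set w := 1 / (n : ℝ) ^ (β + 1)
  simp only [spike, if_neg ht.not_ge, spikeTent, tent, sub_sub_cancel]
  change _ = (n : ℝ) ^ β / w * _
  split_ifs with h₁ h₂ h₃
  · rw [max_eq_left (by linarith [neg_abs_le (t - (n + 1 / 2))]), mul_zero]
  · rw [abs_of_nonpos (by linarith), max_eq_right (by linarith)]; ring
  · rw [abs_of_pos (by linarith), max_eq_right (by linarith)]; ring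
  · rw [max_eq_left (by linarith [le_abs_self (t - (n + 1 / 2))]), mul_zero]

theorem one_div_rpow_le_half {β : ℝ} (hβ : 0 ≤ β) {n : ℕ} (hn : 2 ≤ n) :
    1 / (n : ℝ) ^ (β + 1) ≤ 1 / 2 := by
  have hn' : (2 : ℝ) ≤ n := by exact_mod_cast hn
  gcongr
  exact hn'.trans (Real.self_le_rpow_of_one_le (by linarith) (by linarith))

theorem spikeTent_eq_zero {β : ℝ} (hβ : 0 ≤ β) {n : ℕ} (hn : 2 ≤ n) {t : ℝ}
    (ht : t ∉ Ioo (n : ℝ) (n + 1)) : spikeTent β n t = 0 := by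
  refine tent_eq_zero ((one_div_rpow_le_half hβ hn).trans ?_)
  rw [mem_Ioo, not_and_or, not_lt, not_lt] at ht
  exact le_abs'.2 (ht.imp (fun _ => by linarith) (fun _ => by linarith))

theorem eqOn_spike_spikeTent {β : ℝ} (hβ : 0 ≤ β) {n : ℕ} (hn : 2 ≤ n) :
    EqOn (spike β) (spikeTent β n) (Icc (n : ℝ) (n + 1)) := by
  have hn' : (2 : ℝ) ≤ n := by exact_mod_cast hn
  rintro t ⟨hnt, htn⟩
  rcases htn.lt_or_eq with htn | rfl
  · rcases (hn'.trans hnt).lt_or_eq with h2t | rfl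
    · rw [spike_eq_spikeTent_floor β h2t, (Nat.floor_eq_iff (by linarith)).2 ⟨hnt, htn⟩]
    · rw [spike_of_le_two le_rfl, spikeTent_eq_zero hβ hn fun h => by linarith [h.1]]
  · have hfloor : ⌊(n : ℝ) + 1⌋₊ = n + 1 := by exact_mod_cast Nat.floor_natCast (n + 1)
    rw [spike_eq_spikeTent_floor β (by linarith), hfloor,
      spikeTent_eq_zero hβ (by omega) (by push_cast; simp),
      spikeTent_eq_zero hβ hn (by simp)]

theorem continuous_spike {β : ℝ} (hβ : 0 ≤ β) : Continuous (spike β) := by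
  refine continuous_of_continuousOn_Icc_intCast fun m => ?_
  rcases le_or_gt m 1 with hm | hm
  · refine continuousOn_const.congr fun t ht => spike_of_le_two ?_
    have : (m : ℝ) ≤ 1 := by exact_mod_cast hm
    linarith [ht.2]
  · lift m to ℕ using by omega
    exact continuous_tent.continuousOn.congr (by exact_mod_cast eqOn_spike_spikeTent hβ (by omega))

theorem spike_nonneg (β : ℝ) : 0 ≤ spike β := by
  intro t
  rcases le_or_gt t 2 with ht | ht
  · exact (spike_of_le_two ht).ge
  · rw [spike_eq_spikeTent_floor β ht]
    exact tent_nonneg (by positivity) (by positivity) t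

theorem integral_spike_le {β : ℝ} (hβ : 0 ≤ β) (m : ℕ) :
    ∫ x in (m : ℝ)..m + 1, spike β x ≤ 4 / (m + 1) := by
  rcases lt_or_ge m 2 with hm | hm
  · have hm' : (m : ℝ) + 1 ≤ 2 := by exact_mod_cast hm
    rw [integral_congr (g := fun _ => 0) fun x hx => spike_of_le_two ?_,
      intervalIntegral.integral_zero]
    · positivity
    · rw [uIcc_of_le (by linarith)] at hx; linarith [hx.2]
  have hm0 : (0 : ℝ) < m := by positivity
  rw [integral_congr ((eqOn_spike_spikeTent hβ hm).mono (uIcc_of_le (by linarith)).subset)]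
  calc ∫ x in (m : ℝ)..m + 1, spikeTent β m x
      ≤ 2 * (1 / (m : ℝ) ^ (β + 1)) * (m : ℝ) ^ β :=
        integral_tent_le (by positivity) (by positivity) (by linarith)
    _ = 2 / m := by rw [Real.rpow_add_one hm0.ne']; field_simp
    _ ≤ 4 / (m + 1) := by
        rw [div_le_div_iff₀ hm0 (by positivity)]
        have : (2 : ℝ) ≤ m := by exact_mod_cast hm
        linarith

theorem one_div_two_rpow_div_le {β p x : ℝ} (hβ : 0 ≤ β) (hp : 1 ≤ p) (hx : 1 ≤ x) :
    1 / 2 ^ p / x ≤ (x ^ β / 2) ^ p * (1 / x ^ (β + 1)) := by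
  have hx0 : 0 < x := by linarith
  have hβp : x ^ β ≤ (x ^ β) ^ p := by
    rw [← Real.rpow_mul hx0.le]
    exact Real.rpow_le_rpow_of_exponent_le hx (le_mul_of_one_le_right hβ hp)
  rw [Real.div_rpow (by positivity) zero_le_two, Real.rpow_add_one hx0.ne']
  calc 1 / 2 ^ p / x = x ^ β / 2 ^ p * (1 / (x ^ β * x)) := by field_simp
    _ ≤ _ := by gcongr

theorem ofReal_le_setLIntegral_rpow_spike {β : ℝ} (hβ : 0 ≤ β) {p : ℝ} (hp : 1 ≤ p) {n : ℕ}
    (hn : 2 ≤ n) :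
    ENNReal.ofReal (1 / 2 ^ p / n) ≤
      ∫⁻ x in Ico (n : ℝ) (n + 1), ENNReal.ofReal (spike β x ^ p) := by
  set w := 1 / (n : ℝ) ^ (β + 1)
  have hw : w ≤ 1 / 2 := one_div_rpow_le_half hβ hn
  have hsub : Icc ((n : ℝ) + 1 / 2 - w / 2) (n + 1 / 2 + w / 2) ⊆ Icc (n : ℝ) (n + 1) :=
    Icc_subset_Icc (by linarith) (by linarith)
  have hsub' : Icc ((n : ℝ) + 1 / 2 - w / 2) (n + 1 / 2 + w / 2) ⊆ Ico (n : ℝ) (n + 1) :=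
    fun x hx => ⟨(hsub hx).1, by linarith [hx.2]⟩
  calc ENNReal.ofReal (1 / 2 ^ p / n)
      ≤ ENNReal.ofReal (((n : ℝ) ^ β / 2) ^ p * w) :=
        ENNReal.ofReal_le_ofReal
          (one_div_two_rpow_div_le hβ hp (by exact_mod_cast one_le_two.trans hn))
    _ ≤ ∫⁻ x in Icc ((n : ℝ) + 1 / 2 - w / 2) (n + 1 / 2 + w / 2),
          ENNReal.ofReal (spikeTent β n x ^ p) :=
        ofReal_le_setLIntegral_rpow_tent (by positivity) (by positivity) (by linarith)
    _ = ∫⁻ x in Icc ((n : ℝ) + 1 / 2 - w / 2) (n + 1 / 2 + w / 2),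
          ENNReal.ofReal (spike β x ^ p) :=
        setLIntegral_congr_fun measurableSet_Icc fun x hx => by
          rw [eqOn_spike_spikeTent hβ hn (hsub hx)]
    _ ≤ _ := lintegral_mono_set hsub'

/-- For every `β > 0`, the spike function `g` is continuous and non-negative on `[0, ∞)`,
and for every `p ∈ (1, ∞)`: `∫₀^∞ (∫ₜ^{t+1} g(s) ds)^p dt < ∞` while
`∫₀^∞ g(s)^p ds = +∞`. -/
theorem spike_average_Lp_not_Lp (β : ℝ) (hβ : 0 < β) :
    ContinuousOn (spike β) (Set.Ici 0) ∧
    (∀ t ∈ Set.Ici (0 : ℝ), 0 ≤ spike β t) ∧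
    (∀ p ∈ Set.Ioi (1 : ℝ),
      (∫⁻ t in Set.Ici (0 : ℝ),
          ENNReal.ofReal ((∫ s in t..(t + 1), spike β s) ^ p)) < ⊤ ∧
      (∫⁻ s in Set.Ici (0 : ℝ), ENNReal.ofReal (spike β s ^ p)) = ⊤) := by
  have hcont := continuous_spike hβ.le
  refine ⟨hcont.continuousOn, fun t _ => spike_nonneg β t, fun p hp => ⟨?_, ?_⟩⟩
  · refine setLIntegral_Ici_rpow_lt_top_of_le_div (C := 4 * 4) hp
      (fun t ht => integral_nonneg (by linarith) fun x _ => spike_nonneg β x) fun t ht => ?_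
    exact integral_add_one_le_of_forall_nat hcont (spike_nonneg β) (integral_spike_le hβ.le) ht
  · exact setLIntegral_Ici_eq_top_of_forall_nat (by positivity) 2 fun n hn =>
      ofReal_le_setLIntegral_rpow_spike hβ.le (le_of_lt hp) hn
end
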